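/- arXiv:math/0006150 — 8 statements merged into one kernel-verified Lean document; each statement's English description precedes it below -/
import Mathlib

section
/- For G = S₃ and C = {u, v, w} the transpositions, the kernel K := ker(id − Ψ) ⊆ V is exactly the linear span of the five vectors (u,u), (v,v), (w,w), (u,v)+(v,w)+(w,u), and (v,u)+(w,v)+(u,w); in particular K has dimension 5 (so the degree-2 component Ω² of the bicovariant exterior algebra of ℂ[S₃] is 4-dimensional over the function algebra). -/
/-! Setup for `S₃`: `u = (12)`, `v = (23)`, `w = uvu = (13)`, the conjugacy class
`C = {u,v,w}` of transpositions, the vector space `V` with basis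
`{(a,b) : a,b ∈ C}` (realized as functions `C × C → ℂ`), the braiding
`Ψ(a,b) = (aba⁻¹, a)` (pointwise `(Ψf)(c,d) = f(d, d⁻¹cd)`) and `K = ker(id − Ψ)`. -/

def pu : Equiv.Perm (Fin 3) := Equiv.swap 0 1
def pv : Equiv.Perm (Fin 3) := Equiv.swap 1 2
def pw : Equiv.Perm (Fin 3) := pu * pv * pu

/-- The conjugacy class of transpositions in `S₃`. -/
def C3 : Finset (Equiv.Perm (Fin 3)) := {pu, pv, pw}

lemma mem_conj3 : ∀ d c : {x // x ∈ C3},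
    (d : Equiv.Perm (Fin 3))⁻¹ * c * d ∈ C3 := by decide

lemma mem_pu : pu ∈ C3 := by decide
lemma mem_pv : pv ∈ C3 := by decide
lemma mem_pw : pw ∈ C3 := by decide

def cu : {x // x ∈ C3} := ⟨pu, mem_pu⟩
def cv : {x // x ∈ C3} := ⟨pv, mem_pv⟩
def cw : {x // x ∈ C3} := ⟨pw, mem_pw⟩

/-- The basis vector `(a,b)` of `V`. -/
def bvec (a b : {x // x ∈ C3}) : {x // x ∈ C3} × {x // x ∈ C3} → ℂ :=
  fun p => if p = (a, b) then 1 else 0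

/-- The braiding `Ψ` with `Ψ(a,b) = (aba⁻¹, a)`, i.e. `(Ψf)(c,d) = f(d, d⁻¹cd)`. -/
noncomputable def Psi3 :
    ({x // x ∈ C3} × {x // x ∈ C3} → ℂ) →ₗ[ℂ] ({x // x ∈ C3} × {x // x ∈ C3} → ℂ) where
  toFun f p := f (p.2, ⟨(p.2 : Equiv.Perm (Fin 3))⁻¹ * p.1 * p.2, mem_conj3 p.2 p.1⟩)
  map_add' _ _ := rfl
  map_smul' _ _ := rfl

/-- `K = ker(id − Ψ)`, the space of degree-2 relations. -/
noncomputable def K3 : Submodule ℂ ({x // x ∈ C3} × {x // x ∈ C3} → ℂ) :=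
  LinearMap.ker (LinearMap.id - Psi3)


def sig3 (p : {x // x ∈ C3} × {x // x ∈ C3}) : {x // x ∈ C3} × {x // x ∈ C3} :=
  (p.2, ⟨(p.2 : Equiv.Perm (Fin 3))⁻¹ * p.1 * p.2, mem_conj3 p.2 p.1⟩)

lemma tri3 : ∀ x : {x // x ∈ C3}, x = cu ∨ x = cv ∨ x = cw := by decide

lemma sig_uu : sig3 (cu, cu) = (cu, cu) := by decide
lemma sig_uv : sig3 (cu, cv) = (cv, cw) := by decide
lemma sig_vw : sig3 (cv, cw) = (cw, cu) := by decide
lemma sig_wu : sig3 (cw, cu) = (cu, cv) := by decide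
lemma sig_vu : sig3 (cv, cu) = (cu, cw) := by decide
lemma sig_uw : sig3 (cu, cw) = (cw, cv) := by decide
lemma sig_wv : sig3 (cw, cv) = (cv, cu) := by decide
lemma sig_vv : sig3 (cv, cv) = (cv, cv) := by decide
lemma sig_ww : sig3 (cw, cw) = (cw, cw) := by decide

lemma ne_uv : cu ≠ cv := by decide
lemma ne_vu : cv ≠ cu := by decide
lemma ne_uw : cu ≠ cw := by decide
lemma ne_wu : cw ≠ cu := by decide
lemma ne_vw : cv ≠ cw := by decide
lemma ne_wv : cw ≠ cv := by decide

lemma mem_K3_iff (f : {x // x ∈ C3} × {x // x ∈ C3} → ℂ) :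
    f ∈ K3 ↔ ∀ p, f p = f (sig3 p) := by
  rw [K3, LinearMap.mem_ker, LinearMap.sub_apply, LinearMap.id_apply, sub_eq_zero,
    funext_iff]
  exact Iff.rfl

lemma K3_eq_span : K3 = Submodule.span ℂ
    {bvec cu cu, bvec cv cv, bvec cw cw,
      bvec cu cv + bvec cv cw + bvec cw cu,
      bvec cv cu + bvec cw cv + bvec cu cw} := by
  apply le_antisymm
  · intro f hf
    rw [mem_K3_iff] at hf
    have h1 : f (cv, cw) = f (cw, cu) := by have := hf (cv, cw); rwa [sig_vw] at this
    have h2 : f (cu, cv) = f (cv, cw) := by have := hf (cu, cv); rwa [sig_uv] at this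
    have h3 : f (cv, cu) = f (cu, cw) := by have := hf (cv, cu); rwa [sig_vu] at this
    have h4 : f (cu, cw) = f (cw, cv) := by have := hf (cu, cw); rwa [sig_uw] at this
    have key : f = f (cu, cu) • bvec cu cu + f (cv, cv) • bvec cv cv +
        f (cw, cw) • bvec cw cw +
        f (cu, cv) • (bvec cu cv + bvec cv cw + bvec cw cu) +
        f (cv, cu) • (bvec cv cu + bvec cw cv + bvec cu cw) := by
      funext p
      obtain ⟨a, b⟩ := p
      rcases tri3 a with rfl | rfl | rfl <;> rcases tri3 b with rfl | rfl | rfl <;>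
        simp [bvec, Prod.mk.injEq, ne_uv, ne_vu, ne_uw, ne_wu, ne_vw, ne_wv,
          h1, h2, h3, h4]
    rw [key]
    apply Submodule.add_mem
    apply Submodule.add_mem
    apply Submodule.add_mem
    apply Submodule.add_mem
    · exact Submodule.smul_mem _ _ (Submodule.subset_span (by left; rfl))
    · exact Submodule.smul_mem _ _ (Submodule.subset_span (by right; left; rfl))
    · exact Submodule.smul_mem _ _ (Submodule.subset_span (by right; right; left; rfl))
    · exact Submodule.smul_mem _ _ (Submodule.subset_span (by right; right; right; left; rfl))
    · exact Submodule.smul_mem _ _ (Submodule.subset_span (by right; right; right; right; rfl))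
  · rw [Submodule.span_le]
    rintro g (rfl | rfl | rfl | rfl | rfl) <;>
    · rw [SetLike.mem_coe, mem_K3_iff]
      intro p
      obtain ⟨a, b⟩ := p
      rcases tri3 a with rfl | rfl | rfl <;> rcases tri3 b with rfl | rfl | rfl <;>
        simp only [sig_uu, sig_uv, sig_uw, sig_vu, sig_vv, sig_vw, sig_wu, sig_wv,
          sig_ww] <;>
        simp [bvec, Prod.mk.injEq, ne_uv, ne_vu, ne_uw, ne_wu, ne_vw, ne_wv]

noncomputable def gfam : Fin 5 → ({x // x ∈ C3} × {x // x ∈ C3} → ℂ) :=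
  ![bvec cu cu, bvec cv cv, bvec cw cw,
    bvec cu cv + bvec cv cw + bvec cw cu,
    bvec cv cu + bvec cw cv + bvec cu cw]

lemma range_gfam : Set.range gfam =
    {bvec cu cu, bvec cv cv, bvec cw cw,
      bvec cu cv + bvec cv cw + bvec cw cu,
      bvec cv cu + bvec cw cv + bvec cu cw} := by
  ext x
  simp [gfam, Matrix.range_cons, Matrix.range_empty, Set.mem_insert_iff]
  tauto

lemma lin_indep_gfam : LinearIndependent ℂ gfam := by
  rw [Fintype.linearIndependent_iff]
  intro g hg i
  fin_cases i
  · have := congrFun hg (cu, cu)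
    simpa [gfam, Fin.sum_univ_five, bvec, Prod.mk.injEq, ne_uv, ne_vu, ne_uw, ne_wu,
      ne_vw, ne_wv, Matrix.vecHead, Matrix.vecTail] using this
  · have := congrFun hg (cv, cv)
    simpa [gfam, Fin.sum_univ_five, bvec, Prod.mk.injEq, ne_uv, ne_vu, ne_uw, ne_wu,
      ne_vw, ne_wv, Matrix.vecHead, Matrix.vecTail] using this
  · have := congrFun hg (cw, cw)
    simpa [gfam, Fin.sum_univ_five, bvec, Prod.mk.injEq, ne_uv, ne_vu, ne_uw, ne_wu,
      ne_vw, ne_wv, Matrix.vecHead, Matrix.vecTail] using this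
  · have := congrFun hg (cu, cv)
    simpa [gfam, Fin.sum_univ_five, bvec, Prod.mk.injEq, ne_uv, ne_vu, ne_uw, ne_wu,
      ne_vw, ne_wv, Matrix.vecHead, Matrix.vecTail] using this
  · have := congrFun hg (cv, cu)
    simpa [gfam, Fin.sum_univ_five, bvec, Prod.mk.injEq, ne_uv, ne_vu, ne_uw, ne_wu,
      ne_vw, ne_wv, Matrix.vecHead, Matrix.vecTail] using this

lemma finrank_K3 : Module.finrank ℂ K3 = 5 := by
  rw [K3_eq_span, ← range_gfam, finrank_span_eq_card lin_indep_gfam]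
  simp

lemma card_C3 : Fintype.card {x // x ∈ C3} = 3 := by
  rw [Fintype.card_coe]; decide

lemma finrank_V : Module.finrank ℂ ({x // x ∈ C3} × {x // x ∈ C3} → ℂ) = 9 := by
  rw [Module.finrank_fintype_fun_eq_card, Fintype.card_prod, card_C3]

lemma finrank_quot : Module.finrank ℂ (({x // x ∈ C3} × {x // x ∈ C3} → ℂ) ⧸ K3) = 4 := by
  have h := Submodule.finrank_quotient_add_finrank K3
  rw [finrank_K3, finrank_V] at h
  omega

/-- For `S₃` and the class of transpositions, `K = ker(id − Ψ)`
is exactly the span of the five vectors `(u,u)`, `(v,v)`, `(w,w)`,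
`(u,v)+(v,w)+(w,u)`, `(v,u)+(w,v)+(u,w)`; in particular `dim K = 5`, so the
degree-2 component `Ω² ≅ V/K` of the bicovariant exterior algebra of `ℂ[S₃]`
is 4-dimensional. -/
theorem S3_kernel_of_braiding :
    K3 = Submodule.span ℂ
      {bvec cu cu, bvec cv cv, bvec cw cw,
        bvec cu cv + bvec cv cw + bvec cw cu,
        bvec cv cu + bvec cw cv + bvec cu cw} ∧
    Module.finrank ℂ K3 = 5 ∧
    Module.finrank ℂ (({x // x ∈ C3} × {x // x ∈ C3} → ℂ) ⧸ K3) = 4 := by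
  exact ⟨K3_eq_span, finrank_K3, finrank_quot⟩
end

section
/- For each g ∈ G with S_g ≠ ∅, let λ^{g,1}, …, λ^{g,k_g} be a basis of the fixed space P_g := {λ : S_g → ℂ : λ∘σ_g = λ}, and suppose μ^{g,1}, …, μ^{g,k_g} : S_g → ℂ satisfy Σ_{a∈S_g} μ^{g,α}(a)·λ^{g,β}(a) = δ_{αβ}. Define the linear map Q : V → V on basis vectors by Q(a,b) := Σ_α μ^{ab,α}(a) · Σ_{c∈S_{ab}} λ^{ab,α}(c)·(c, c⁻¹ab) (note a ∈ S_{ab} always). Then: (i) Q∘Q = Q; (ii) Q(v) = v for every v ∈ ker(id − Ψ); (iii) the image of Q is exactly ker(id − Ψ). Consequently id − Q is a projection with kernel ker(id − Ψ), giving a canonical splitting i of the wedge-product surjection Ω¹⊗Ω¹ → Ω². -/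
section
variable {G : Type*} [Group G]

/-- The braiding `Ψ` of the Woronowicz bicovariant calculus determined by an
Ad-stable subset `C` of a group `G`: on basis vectors `Ψ(a,b) = (aba⁻¹, a)`,
pointwise `(Ψf)(c,d) = f(d, d⁻¹cd)`. -/
noncomputable def braiding (C : Finset G)
    (hconj : ∀ (g c : G), c ∈ C → g * c * g⁻¹ ∈ C) :
    ({x // x ∈ C} × {x // x ∈ C} → ℂ) →ₗ[ℂ] ({x // x ∈ C} × {x // x ∈ C} → ℂ) where
  toFun f p := f (p.2, ⟨(p.2 : G)⁻¹ * (p.1 : G) * (p.2 : G), by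
    simpa using hconj (p.2 : G)⁻¹ (p.1 : G) p.1.2⟩)
  map_add' _ _ := rfl
  map_smul' _ _ := rfl

/-- The basis vector `(a,b)` of `V = ℂ(C × C)`. -/
def basisVec [DecidableEq G] {C : Finset G} (a b : {x // x ∈ C}) :
    {x // x ∈ C} × {x // x ∈ C} → ℂ :=
  fun p => if p = (a, b) then 1 else 0

end

section Aux

variable {G : Type*} [Group G] [DecidableEq G]

/-- The fiberSlice of `f : ℂ(C×C)` along the fiber over `g` (= product of the coordinates). -/
def fiberSlice (C : Finset G) (f : {x // x ∈ C} × {x // x ∈ C} → ℂ) (g c : G) : ℂ :=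
  if h : c ∈ C ∧ c⁻¹ * g ∈ C then f (⟨c, h.1⟩, ⟨c⁻¹ * g, h.2⟩) else 0

lemma fiberSlice_point (C : Finset G) (f : {x // x ∈ C} × {x // x ∈ C} → ℂ)
    (p : {x // x ∈ C} × {x // x ∈ C}) :
    fiberSlice C f ((p.1 : G) * (p.2 : G)) (p.1 : G) = f p := by
  have h : (p.1 : G) ∈ C ∧ (p.1 : G)⁻¹ * ((p.1 : G) * (p.2 : G)) ∈ C := by
    refine ⟨p.1.2, ?_⟩
    rw [inv_mul_cancel_left]; exact p.2.2
  rw [fiberSlice, dif_pos h]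
  congr 1
  refine Prod.ext (Subtype.ext rfl) (Subtype.ext ?_)
  simp [inv_mul_cancel_left]

lemma sum_S [Fintype G] (C : Finset G) (S : G → Finset G)
    (hS : ∀ g, S g = C.filter (fun a => a⁻¹ * g ∈ C)) (g : G) (F : G → ℂ) :
    ∑ q : {x // x ∈ C} × {x // x ∈ C},
      (if g = (q.1 : G) * (q.2 : G) then F (q.1 : G) else 0) = ∑ a ∈ S g, F a := by
  rw [hS, Finset.sum_filter, Fintype.sum_prod_type,
    ← Finset.sum_coe_sort C (fun a => if a⁻¹ * g ∈ C then F a else 0)]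
  refine Finset.sum_congr rfl fun a _ => ?_
  refine ((Finset.sum_coe_sort C
    (fun x => if g = (a : G) * x then F (a : G) else 0)).trans ?_)
  have hcond : ∀ b : G, (g = (a : G) * b) ↔ (b = (a : G)⁻¹ * g) := by
    intro b
    constructor
    · intro h; rw [h, inv_mul_cancel_left]
    · intro h; rw [h, mul_inv_cancel_left]
  simp only [hcond]
  rw [Finset.sum_ite_eq' C ((a : G)⁻¹ * g) (fun _ => F (a : G))]

end Aux

/-- Given for each `g` with `S_g ≠ ∅` a basis `λ^{g,α}` of the
fixed space `P_g = {λ on S_g : λ∘σ_g = λ}` and dual functionals `μ^{g,α}`, the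
map `Q` defined on basis vectors by
`Q(a,b) = Σ_α μ^{ab,α}(a)·Σ_{c∈S_{ab}} λ^{ab,α}(c)·(c, c⁻¹ab)` satisfies:
(i) `Q∘Q = Q`; (ii) `Q` fixes `ker(id − Ψ)`; (iii) `range Q = ker(id − Ψ)`.
Consequently `id − Q` is a projection with kernel `ker(id − Ψ)`, splitting the
wedge surjection `Ω¹⊗Ω¹ → Ω²`. -/
theorem canonical_projection_onto_degree_two_relations
    {G : Type*} [Group G] [Fintype G] [DecidableEq G]
    (C : Finset G) (hne : C.Nonempty) (he : (1 : G) ∉ C)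
    (hconj : ∀ (g c : G), c ∈ C → g * c * g⁻¹ ∈ C)
    (S : G → Finset G) (hS : ∀ g, S g = C.filter (fun a => a⁻¹ * g ∈ C))
    (k : G → ℕ) (lam mu : (g : G) → Fin (k g) → (G → ℂ))
    -- each `λ^{g,α}` lies in `P_g` (supported on `S_g` and `σ_g`-invariant) …
    (hsupp : ∀ g, (S g).Nonempty → ∀ α, ∀ a ∉ S g, lam g α a = 0)
    (hinv : ∀ g, (S g).Nonempty → ∀ α, ∀ a ∈ S g, lam g α (a⁻¹ * g) = lam g α a)
    -- … and the family `λ^{g,·}` is a basis of `P_g` …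
    (hli : ∀ g, (S g).Nonempty → LinearIndependent ℂ (lam g))
    (hspan : ∀ g, (S g).Nonempty → ∀ f : G → ℂ, (∀ a ∉ S g, f a = 0) →
      (∀ a ∈ S g, f (a⁻¹ * g) = f a) → f ∈ Submodule.span ℂ (Set.range (lam g)))
    -- … with dual functionals `μ^{g,α}`:
    (hdual : ∀ g, (S g).Nonempty → ∀ α β : Fin (k g),
      ∑ a ∈ S g, mu g α a * lam g β a = if α = β then 1 else 0)
    (Q : ({x // x ∈ C} × {x // x ∈ C} → ℂ) →ₗ[ℂ] ({x // x ∈ C} × {x // x ∈ C} → ℂ))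
    (hQ : ∀ a b : {x // x ∈ C}, Q (basisVec a b) =
      fun p => if (p.1 : G) * (p.2 : G) = (a : G) * (b : G) then
        ∑ α : Fin (k ((a : G) * (b : G))),
          mu ((a : G) * (b : G)) α (a : G) * lam ((a : G) * (b : G)) α (p.1 : G)
      else 0) :
    Q ∘ₗ Q = Q ∧
    (∀ v ∈ LinearMap.ker (LinearMap.id - braiding C hconj), Q v = v) ∧
    LinearMap.range Q = LinearMap.ker (LinearMap.id - braiding C hconj) ∧
    (LinearMap.id - Q) ∘ₗ (LinearMap.id - Q) = LinearMap.id - Q ∧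
    LinearMap.ker (LinearMap.id - Q) =
      LinearMap.ker (LinearMap.id - braiding C hconj) := by
  classical
  have memS : ∀ (g a : G), a ∈ S g ↔ a ∈ C ∧ a⁻¹ * g ∈ C := by
    intro g a; rw [hS]; simp
  -- the pointwise formula for Q
  have Qval : ∀ (f : {x // x ∈ C} × {x // x ∈ C} → ℂ) (p : {x // x ∈ C} × {x // x ∈ C}),
      Q f p = ∑ a ∈ S ((p.1 : G) * (p.2 : G)),
        fiberSlice C f ((p.1 : G) * (p.2 : G)) a *
          ∑ α : Fin (k ((p.1 : G) * (p.2 : G))),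
            mu ((p.1 : G) * (p.2 : G)) α a * lam ((p.1 : G) * (p.2 : G)) α (p.1 : G) := by
    intro f p
    have hf : f = ∑ q : {x // x ∈ C} × {x // x ∈ C}, f q • basisVec q.1 q.2 := by
      funext r
      simp [basisVec, Finset.sum_apply, Finset.sum_ite_eq]
    conv_lhs => rw [hf]
    rw [map_sum, Finset.sum_apply]
    simp only [map_smul, Pi.smul_apply, smul_eq_mul]
    have key : ∀ q : {x // x ∈ C} × {x // x ∈ C},
        f q * Q (basisVec q.1 q.2) p
          = if (p.1 : G) * (p.2 : G) = (q.1 : G) * (q.2 : G) then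
              fiberSlice C f ((p.1 : G) * (p.2 : G)) (q.1 : G) *
                ∑ α : Fin (k ((p.1 : G) * (p.2 : G))),
                  mu ((p.1 : G) * (p.2 : G)) α (q.1 : G) *
                    lam ((p.1 : G) * (p.2 : G)) α (p.1 : G)
            else 0 := by
      intro q
      rw [hQ q.1 q.2]
      simp only [mul_ite, mul_zero]
      by_cases h : (p.1 : G) * (p.2 : G) = (q.1 : G) * (q.2 : G)
      · rw [if_pos h, if_pos h, h, fiberSlice_point C f q]
      · rw [if_neg h, if_neg h]
    rw [Finset.sum_congr rfl fun q _ => key q]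
    exact sum_S C S hS ((p.1 : G) * (p.2 : G))
      (fun c => fiberSlice C f ((p.1 : G) * (p.2 : G)) c *
        ∑ α : Fin (k ((p.1 : G) * (p.2 : G))),
          mu ((p.1 : G) * (p.2 : G)) α c * lam ((p.1 : G) * (p.2 : G)) α (p.1 : G))
  have hSne : ∀ p : {x // x ∈ C} × {x // x ∈ C}, (S ((p.1 : G) * (p.2 : G))).Nonempty := by
    intro p
    exact ⟨p.1, (memS _ _).2 ⟨p.1.2, by rw [inv_mul_cancel_left]; exact p.2.2⟩⟩
  -- rearrangement
  have rearr : ∀ (g : G) (s : G → ℂ) (y : G),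
      ∑ c ∈ S g, s c * ∑ β, mu g β c * lam g β y
        = ∑ β, (∑ c ∈ S g, s c * mu g β c) * lam g β y := by
    intro g s y
    calc ∑ c ∈ S g, s c * ∑ β, mu g β c * lam g β y
        = ∑ c ∈ S g, ∑ β, s c * mu g β c * lam g β y := by
          refine Finset.sum_congr rfl fun c _ => ?_
          rw [Finset.mul_sum]
          exact Finset.sum_congr rfl fun β _ => by ring
      _ = ∑ β, ∑ c ∈ S g, s c * mu g β c * lam g β y := Finset.sum_comm
      _ = ∑ β, (∑ c ∈ S g, s c * mu g β c) * lam g β y :=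
          Finset.sum_congr rfl fun β _ => (Finset.sum_mul _ _ _).symm
  -- the dual contraction
  have dual_contract : ∀ (g : G), (S g).Nonempty → ∀ (d : Fin (k g) → ℂ) (x : G),
      ∑ a ∈ S g, (∑ β, d β * lam g β a) * (∑ α, mu g α a * lam g α x)
        = ∑ β, d β * lam g β x := by
    intro g hg d x
    calc ∑ a ∈ S g, (∑ β, d β * lam g β a) * (∑ α, mu g α a * lam g α x)
        = ∑ a ∈ S g, ∑ β, ∑ α, d β * lam g β a * (mu g α a * lam g α x) := by
          simp only [Finset.sum_mul, Finset.mul_sum]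
          exact Finset.sum_congr rfl fun a _ => Finset.sum_comm
      _ = ∑ β, ∑ α, ∑ a ∈ S g, d β * lam g β a * (mu g α a * lam g α x) := by
          rw [Finset.sum_comm]
          exact Finset.sum_congr rfl fun β _ => Finset.sum_comm
      _ = ∑ β, ∑ α, (∑ a ∈ S g, mu g α a * lam g β a) * (d β * lam g α x) := by
          refine Finset.sum_congr rfl fun β _ => Finset.sum_congr rfl fun α _ => ?_
          rw [Finset.sum_mul]
          exact Finset.sum_congr rfl fun a _ => by ring
      _ = ∑ β, ∑ α, (if α = β then (1 : ℂ) else 0) * (d β * lam g α x) := by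
          refine Finset.sum_congr rfl fun β _ => Finset.sum_congr rfl fun α _ => ?_
          rw [hdual g hg α β]
      _ = ∑ β, d β * lam g β x := by
          refine Finset.sum_congr rfl fun β _ => ?_
          simp [ite_mul, Finset.sum_ite_eq']
  -- fiberSlices of Q f
  have fiberSliceQ : ∀ (f : {x // x ∈ C} × {x // x ∈ C} → ℂ) (g a : G), a ∈ S g →
      fiberSlice C (Q f) g a = ∑ c ∈ S g, fiberSlice C f g c * ∑ β, mu g β c * lam g β a := by
    intro f g a ha
    obtain ⟨ha1, ha2⟩ := (memS g a).1 ha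
    rw [fiberSlice, dif_pos ⟨ha1, ha2⟩]
    have h := Qval f (⟨a, ha1⟩, ⟨a⁻¹ * g, ha2⟩)
    simp only [mul_inv_cancel_left] at h
    rw [show a * (a⁻¹ * g) = g from mul_inv_cancel_left a g] at h
    exact h
  -- (i)
  have hQQ : Q ∘ₗ Q = Q := by
    apply LinearMap.ext; intro f
    funext p
    rw [LinearMap.comp_apply, Qval (Q f) p, Qval f p]
    set g := (p.1 : G) * (p.2 : G) with hg
    have hgne := hSne p
    calc ∑ a ∈ S g, fiberSlice C (Q f) g a * ∑ α, mu g α a * lam g α (p.1 : G)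
        = ∑ a ∈ S g, (∑ β, (∑ c ∈ S g, fiberSlice C f g c * mu g β c) * lam g β a) *
            ∑ α, mu g α a * lam g α (p.1 : G) := by
          refine Finset.sum_congr rfl fun a ha => ?_
          rw [fiberSliceQ f g a ha, rearr g _ a]
      _ = ∑ β, (∑ c ∈ S g, fiberSlice C f g c * mu g β c) * lam g β (p.1 : G) :=
          dual_contract g hgne _ (p.1 : G)
      _ = ∑ c ∈ S g, fiberSlice C f g c * ∑ α, mu g α c * lam g α (p.1 : G) :=
          (rearr g _ _).symm
  -- (ii)
  have hfix : ∀ v ∈ LinearMap.ker (LinearMap.id - braiding C hconj), Q v = v := by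
    intro v hv
    have hΨ : braiding C hconj v = v := by
      have h := LinearMap.mem_ker.1 hv
      rw [LinearMap.sub_apply, LinearMap.id_apply, sub_eq_zero] at h
      exact h.symm
    funext p
    rw [Qval v p]
    set g := (p.1 : G) * (p.2 : G) with hg
    have hgne := hSne p
    have hσ : ∀ a ∈ S g, fiberSlice C v g (a⁻¹ * g) = fiberSlice C v g a := by
      intro a ha
      obtain ⟨ha1, ha2⟩ := (memS g a).1 ha
      have h3 : (a⁻¹ * g)⁻¹ * g ∈ C := by
        have hh := hconj g⁻¹ a ha1
        have : g⁻¹ * a * g⁻¹⁻¹ = (a⁻¹ * g)⁻¹ * g := by group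
        rwa [this] at hh
      rw [fiberSlice, fiberSlice, dif_pos ⟨ha2, h3⟩, dif_pos ⟨ha1, ha2⟩]
      conv_rhs => rw [← hΨ]
      show v _ = v _
      congr 1
      refine Prod.ext (Subtype.ext rfl) (Subtype.ext ?_)
      show (a⁻¹ * g)⁻¹ * g = (a⁻¹ * g)⁻¹ * a * (a⁻¹ * g)
      group
    have h0 : ∀ a ∉ S g, fiberSlice C v g a = 0 := by
      intro a ha
      rw [fiberSlice, dif_neg]
      intro h; exact ha ((memS g a).2 h)
    obtain ⟨d, hd⟩ := (Submodule.mem_span_range_iff_exists_fun ℂ).1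
      (hspan g hgne (fiberSlice C v g) h0 hσ)
    have hsl : ∀ a, fiberSlice C v g a = ∑ β, d β * lam g β a := by
      intro a
      rw [← hd]
      simp [Finset.sum_apply]
    calc ∑ a ∈ S g, fiberSlice C v g a * ∑ α, mu g α a * lam g α (p.1 : G)
        = ∑ a ∈ S g, (∑ β, d β * lam g β a) * ∑ α, mu g α a * lam g α (p.1 : G) :=
          Finset.sum_congr rfl fun a _ => by rw [hsl]
      _ = ∑ β, d β * lam g β (p.1 : G) := dual_contract g hgne d _
      _ = fiberSlice C v g (p.1 : G) := (hsl _).symm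
      _ = v p := fiberSlice_point C v p
  -- (iii)
  have hrange : LinearMap.range Q = LinearMap.ker (LinearMap.id - braiding C hconj) := by
    apply le_antisymm
    · rintro w ⟨f, rfl⟩
      rw [LinearMap.mem_ker, LinearMap.sub_apply, LinearMap.id_apply, sub_eq_zero]
      funext p
      have hb : braiding C hconj (Q f) p
          = Q f (p.2, ⟨(p.2 : G)⁻¹ * (p.1 : G) * (p.2 : G), by
              simpa using hconj (p.2 : G)⁻¹ (p.1 : G) p.1.2⟩) := rfl
      have hprod : (p.2 : G) * ((p.2 : G)⁻¹ * (p.1 : G) * (p.2 : G))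
          = (p.1 : G) * (p.2 : G) := by group
      have hp1 : (p.1 : G) ∈ S ((p.1 : G) * (p.2 : G)) :=
        (memS _ _).2 ⟨p.1.2, by rw [inv_mul_cancel_left]; exact p.2.2⟩
      have hlam : ∀ α, lam ((p.1 : G) * (p.2 : G)) α (p.2 : G)
          = lam ((p.1 : G) * (p.2 : G)) α (p.1 : G) := by
        intro α
        have h := hinv ((p.1 : G) * (p.2 : G)) (hSne p) α (p.1 : G) hp1
        rw [← h, inv_mul_cancel_left]
      rw [hb, Qval, Qval]
      simp only
      rw [hprod]
      refine Finset.sum_congr rfl fun a _ => ?_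
      congr 1
      exact Finset.sum_congr rfl fun α _ => by rw [hlam]
    · intro v hv
      exact ⟨v, hfix v hv⟩
  refine ⟨hQQ, hfix, hrange, ?_, ?_⟩
  · rw [LinearMap.sub_comp, LinearMap.comp_sub, LinearMap.comp_sub, LinearMap.id_comp,
      LinearMap.comp_id, hQQ]
    abel
  · ext v
    simp only [LinearMap.mem_ker, LinearMap.sub_apply, LinearMap.id_apply, sub_eq_zero]
    constructor
    · intro h
      have hm : v ∈ LinearMap.range Q := ⟨v, h.symm⟩
      rw [hrange, LinearMap.mem_ker, LinearMap.sub_apply, LinearMap.id_apply,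
        sub_eq_zero] at hm
      exact hm
    · intro h
      have hv : v ∈ LinearMap.ker (LinearMap.id - braiding C hconj) := by
        rw [LinearMap.mem_ker, LinearMap.sub_apply, LinearMap.id_apply, sub_eq_zero]
        exact h
      exact (hfix v hv).symm
end

section
/- For c ∈ C define F_c := −Σ (a,b) ∈ V, the sum over the two ordered pairs (a,b) with a, b ∈ C∖{c} and a ≠ b (a representative of the curvature dE_c of the Levi-Civita connection). Define two lifts: i₁ := id − Ψ : V → V, and i₂ : V → V given on off-diagonal basis vectors by i₂(a,b) := (a,b) − (1/3)·Σ_{c',d'∈C, c'd'=ab} (c',d') for a ≠ b. For j ∈ {1,2} set Ricci_j := Σ_{c∈C} Σ_{a,b∈C} (i_j F_c)(a,b)·[(b, cac) − (b,a)] ∈ V. Then Ricci₁ = −g + Θ and Ricci₂ = (2/3)·(−g + Θ), where g := 3·Σ_{a∈C} (a,a) (the braided-Killing-form metric) and Θ := Σ_{a,b∈C} (a,b) (= θ⊗θ). Thus the Ricci tensor of the Levi-Civita connection on S₃ equals μ·(−g + θ⊗θ) with μ = 1 and μ = 2/3 for the two lifts, i.e. S₃ is essentially an Einstein space of constant curvature.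 -/
lemma mem_bab : ∀ b a : {x // x ∈ C3},
    (b : Equiv.Perm (Fin 3)) * a * b ∈ C3 := by decide

def conjE (b a : {x // x ∈ C3}) : {x // x ∈ C3} :=
  ⟨(b : Equiv.Perm (Fin 3)) * a * b, mem_bab b a⟩

/-- The curvature representative `F_c = dE_c = −Σ_{a,b∈C∖{c}, a≠b} (a,b)`. -/
noncomputable def Fcurv (c : {x // x ∈ C3}) : {x // x ∈ C3} × {x // x ∈ C3} → ℂ :=
  -∑ a : {x // x ∈ C3}, ∑ b : {x // x ∈ C3},
    (if a ≠ c ∧ b ≠ c ∧ a ≠ b then (1 : ℂ) else 0) • bvec a b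

/-- The Ricci tensor associated to a lift `L` of `Ω²` into `Ω¹ ⊗ Ω¹`:
`Ricci = Σ_c Σ_{a,b} (L F_c)(a,b)·[(b, cac) − (b,a)]`. -/
noncomputable def ricci
    (L : ({x // x ∈ C3} × {x // x ∈ C3} → ℂ) →ₗ[ℂ] ({x // x ∈ C3} × {x // x ∈ C3} → ℂ)) :
    {x // x ∈ C3} × {x // x ∈ C3} → ℂ :=
  ∑ c : {x // x ∈ C3}, ∑ a : {x // x ∈ C3}, ∑ b : {x // x ∈ C3},
    (L (Fcurv c)) (a, b) • (bvec b (conjE c a) - bvec b a)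

/-- The braided-Killing-form metric `g = 3·Σ_a (a,a)`. -/
noncomputable def gKilling : {x // x ∈ C3} × {x // x ∈ C3} → ℂ :=
  (3 : ℂ) • ∑ a : {x // x ∈ C3}, bvec a a

/-- `Θ = θ⊗θ = Σ_{a,b} (a,b)`. -/
noncomputable def Theta : {x // x ∈ C3} × {x // x ∈ C3} → ℂ :=
  ∑ a : {x // x ∈ C3}, ∑ b : {x // x ∈ C3}, bvec a b


def eu : {x // x ∈ C3} := ⟨pu, by decide⟩
def ev : {x // x ∈ C3} := ⟨pv, by decide⟩
def ew : {x // x ∈ C3} := ⟨pw, by decide⟩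

lemma univ3 : (Finset.univ : Finset {x // x ∈ C3}) = {eu, ev, ew} := by decide

lemma sum3 {M : Type*} [AddCommMonoid M] (f : {x // x ∈ C3} → M) :
    ∑ a : {x // x ∈ C3}, f a = f eu + f ev + f ew := by
  rw [univ3, Finset.sum_insert (by decide), Finset.sum_insert (by decide),
    Finset.sum_singleton, add_assoc]

lemma Psi3_bvec (a b : {x // x ∈ C3}) : Psi3 (bvec a b) = bvec (conjE a b) a := by
  have key : ∀ p : {x // x ∈ C3} × {x // x ∈ C3},
      ((p.2, (⟨(p.2 : Equiv.Perm (Fin 3))⁻¹ * p.1 * p.2, mem_conj3 p.2 p.1⟩ :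
        {x // x ∈ C3})) = (a, b)) ↔ p = (conjE a b, a) := by
    revert a b; decide
  funext p
  simp [Psi3, bvec, key p]

lemma Fcurv_eu : Fcurv eu = -(bvec ev ew + bvec ew ev) := by
  simp only [Fcurv, sum3]
  norm_num [show eu ≠ ev by decide, show eu ≠ ew by decide, show ev ≠ eu by decide,
    show ev ≠ ew by decide, show ew ≠ eu by decide, show ew ≠ ev by decide]

lemma Fcurv_ev : Fcurv ev = -(bvec eu ew + bvec ew eu) := by
  simp only [Fcurv, sum3]
  norm_num [show eu ≠ ev by decide, show eu ≠ ew by decide, show ev ≠ eu by decide,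
    show ev ≠ ew by decide, show ew ≠ eu by decide, show ew ≠ ev by decide]

lemma Fcurv_ew : Fcurv ew = -(bvec eu ev + bvec ev eu) := by
  simp only [Fcurv, sum3]
  norm_num [show eu ≠ ev by decide, show eu ≠ ew by decide, show ev ≠ eu by decide,
    show ev ≠ ew by decide, show ew ≠ eu by decide, show ew ≠ ev by decide]

lemma cE1 : conjE eu eu = eu := by decide
lemma cE2 : conjE eu ev = ew := by decide
lemma cE3 : conjE eu ew = ev := by decide
lemma cE4 : conjE ev eu = ew := by decide
lemma cE5 : conjE ev ev = ev := by decide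
lemma cE6 : conjE ev ew = eu := by decide
lemma cE7 : conjE ew eu = ev := by decide
lemma cE8 : conjE ew ev = eu := by decide
lemma cE9 : conjE ew ew = ew := by decide

/-- With the lift `i₁ = id − Ψ` one gets `Ricci = −g + θ⊗θ`, and
with the canonical lift `i₂` (`i₂(a,b) = (a,b) − (1/3)Σ_{c'd'=ab}(c',d')` on
off-diagonal basis vectors) one gets `Ricci = (2/3)(−g + θ⊗θ)`; i.e. `S₃` is
essentially an Einstein space of constant curvature. -/
theorem S3_ricci_einstein :
    ricci (LinearMap.id - Psi3) = -gKilling + Theta ∧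
    (∀ i₂ : ({x // x ∈ C3} × {x // x ∈ C3} → ℂ) →ₗ[ℂ]
        ({x // x ∈ C3} × {x // x ∈ C3} → ℂ),
      (∀ a b : {x // x ∈ C3}, a ≠ b →
        i₂ (bvec a b) = bvec a b - (1 / 3 : ℂ) •
          ∑ c' : {x // x ∈ C3}, ∑ d' : {x // x ∈ C3},
            (if (c' : Equiv.Perm (Fin 3)) * (d' : Equiv.Perm (Fin 3)) =
                (a : Equiv.Perm (Fin 3)) * (b : Equiv.Perm (Fin 3))
              then (1 : ℂ) else 0) • bvec c' d') →
      ricci i₂ = (2 / 3 : ℂ) • (-gKilling + Theta)) := by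
  constructor
  · simp only [ricci, sum3, LinearMap.sub_apply, LinearMap.id_coe, id_eq,
      Fcurv_eu, Fcurv_ev, Fcurv_ew, map_neg, map_add, Psi3_bvec,
      cE1, cE2, cE3, cE4, cE5, cE6, cE7, cE8, cE9,
      Pi.neg_apply, Pi.add_apply, Pi.sub_apply, gKilling, Theta]
    norm_num [bvec, Prod.ext_iff, show eu ≠ ev by decide, show eu ≠ ew by decide,
      show ev ≠ eu by decide, show ev ≠ ew by decide, show ew ≠ eu by decide,
      show ew ≠ ev by decide]
    module
  · intro i₂ h
    have h1 := h eu ev (by decide)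
    have h2 := h ev ew (by decide)
    have h3 := h ew eu (by decide)
    have h4 := h ev eu (by decide)
    have h5 := h ew ev (by decide)
    have h6 := h eu ew (by decide)
    simp only [sum3] at h1 h2 h3 h4 h5 h6
    norm_num (config := { decide := true }) at h1 h2 h3 h4 h5 h6
    simp only [ricci, sum3, Fcurv_eu, Fcurv_ev, Fcurv_ew, map_neg, map_add,
      h1, h2, h3, h4, h5, h6,
      cE1, cE2, cE3, cE4, cE5, cE6, cE7, cE8, cE9,
      Pi.neg_apply, Pi.add_apply, Pi.sub_apply, Pi.smul_apply, gKilling, Theta, smul_eq_mul]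
    norm_num [bvec, Prod.ext_iff, show eu ≠ ev by decide, show eu ≠ ew by decide,
      show ev ≠ eu by decide, show ev ≠ ew by decide, show ew ≠ eu by decide,
      show ew ≠ ev by decide]
    module
end

section
/- Let ρ : S₃ → M₂(ℂ) be a monoid homomorphism with ρ(u) = [[0,1],[1,0]] and ρ(v) = [[1,0],[−1,−1]], and set γ_a := (1/3)(ρ(a) − I) for a ∈ C = {u, v, w}. Then Σ_{a,b∈C} (δ_{a,b} − 1/3)·γ_a·(ρ(b) − I) = I, the 2×2 identity matrix. Consequently the Dirac operator of the Levi-Civita connection, acting on spinors ψ : S₃ → ℂ² by (D̸ψ)(x) = Σ_{a∈C} γ_a·(ψ(xa) − ψ(x)) − Σ_{a,b∈C} (δ_{a,b} − 1/3)·γ_a·(ρ(b) − I)·ψ(x), satisfies (D̸ψ)(x) = Σ_{a∈C} γ_a·(ψ(xa) − ψ(x)) − ψ(x) for all ψ and x. -/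
private lemma my_sum_mulVec {α : Type*} (s : Finset α)
    (f : α → Matrix (Fin 2) (Fin 2) ℂ) (v : Fin 2 → ℂ) :
    (∑ i ∈ s, f i).mulVec v = ∑ i ∈ s, (f i).mulVec v := by
  classical
  induction s using Finset.cons_induction with
  | empty => simp [Matrix.zero_mulVec]
  | cons a s ha ih => rw [Finset.sum_cons, Finset.sum_cons, Matrix.add_mulVec, ih]


/-- For the 2-dimensional representation `ρ` of `S₃` with
`ρ(u) = [[0,1],[1,0]]` and `ρ(v) = [[1,0],[−1,−1]]`, and tautological
gamma-matrices `γ_a = (1/3)(ρ(a) − I)`, the connection term of the Dirac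
operator of the Levi-Civita connection equals the identity matrix:
`Σ_{a,b}(δ_{a,b} − 1/3)·γ_a·(ρ(b) − I) = I`.  Consequently
`(D̸ψ)(x) = Σ_a γ_a·(ψ(xa) − ψ(x)) − ψ(x)`. -/
theorem S3_dirac_operator
    (ρ : Equiv.Perm (Fin 3) →* Matrix (Fin 2) (Fin 2) ℂ)
    (hρu : ρ pu = !![0, 1; 1, 0]) (hρv : ρ pv = !![1, 0; -1, -1])
    (γ : {x // x ∈ C3} → Matrix (Fin 2) (Fin 2) ℂ)
    (hγ : ∀ a, γ a = (1 / 3 : ℂ) • (ρ (a : Equiv.Perm (Fin 3)) - 1)) :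
    (∑ a : {x // x ∈ C3}, ∑ b : {x // x ∈ C3},
      ((if a = b then (1 : ℂ) else 0) - 1 / 3) •
        (γ a * (ρ (b : Equiv.Perm (Fin 3)) - 1))) = 1 ∧
    (∀ (ψ : Equiv.Perm (Fin 3) → Fin 2 → ℂ) (x : Equiv.Perm (Fin 3)),
      ((∑ a : {x // x ∈ C3},
          (γ a).mulVec (ψ (x * (a : Equiv.Perm (Fin 3))) - ψ x)) -
        ∑ a : {x // x ∈ C3}, ∑ b : {x // x ∈ C3},
          ((if a = b then (1 : ℂ) else 0) - 1 / 3) •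
            (γ a * (ρ (b : Equiv.Perm (Fin 3)) - 1)).mulVec (ψ x)) =
      (∑ a : {x // x ∈ C3},
          (γ a).mulVec (ψ (x * (a : Equiv.Perm (Fin 3))) - ψ x)) - ψ x) := by
  have hρw : ρ pw = !![-1, -1; 0, 1] := by
    rw [pw, map_mul, map_mul, hρu, hρv]
    norm_num [Matrix.mul_fin_two]
  have hU : (Finset.univ : Finset {x // x ∈ C3}) =
      {⟨pu, by decide⟩, ⟨pv, by decide⟩, ⟨pw, by decide⟩} := by decide
  have key : (∑ a : {x // x ∈ C3}, ∑ b : {x // x ∈ C3},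
      ((if a = b then (1 : ℂ) else 0) - 1 / 3) •
        (γ a * (ρ (b : Equiv.Perm (Fin 3)) - 1))) = 1 := by
    have e : ∀ (f : {x // x ∈ C3} → Matrix (Fin 2) (Fin 2) ℂ),
        (∑ y ∈ ({⟨pu, by decide⟩, ⟨pv, by decide⟩, ⟨pw, by decide⟩} :
          Finset {x // x ∈ C3}), f y) =
        f ⟨pu, by decide⟩ + f ⟨pv, by decide⟩ + f ⟨pw, by decide⟩ := by
      intro f
      rw [Finset.sum_insert (by decide), Finset.sum_pair (by decide), add_assoc]
    rw [hU]
    simp only [e]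
    simp only [hγ, hρu, hρv, hρw, Subtype.mk.injEq,
      if_pos rfl, if_neg (show pu ≠ pv by decide), if_neg (show pu ≠ pw by decide),
      if_neg (show pv ≠ pu by decide), if_neg (show pv ≠ pw by decide),
      if_neg (show pw ≠ pu by decide), if_neg (show pw ≠ pv by decide)]
    ext i j
    fin_cases i <;> fin_cases j <;>
      norm_num [Matrix.smul_apply, Matrix.mul_apply, Fin.sum_univ_two,
        Matrix.sub_apply, Matrix.one_apply]
  refine ⟨key, fun ψ x => ?_⟩
  have h2 : (∑ a : {x // x ∈ C3}, ∑ b : {x // x ∈ C3},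
      ((if a = b then (1 : ℂ) else 0) - 1 / 3) •
        (γ a * (ρ (b : Equiv.Perm (Fin 3)) - 1)).mulVec (ψ x)) = ψ x := by
    have h := congrArg (fun M => Matrix.mulVec M (ψ x)) key
    simp only [my_sum_mulVec, Matrix.smul_mulVec, Matrix.one_mulVec] at h
    exact h
  rw [h2]
end

section
/- Let W be a complex vector space and ρ a representation of S₃ on W (a monoid homomorphism into the linear endomorphisms of W) such that ρ(uv) − id is bijective. Set γ_a := (1/3)(ρ(a) − id) for a ∈ C. Then: (i) ρ(u) + ρ(v) + ρ(w) = 0, equivalently Σ_{a∈C} γ_a = −id; (ii) for all a, b ∈ C: γ_a∘γ_b + γ_b∘γ_a + (2/3)(γ_a + γ_b) = (1/3)(δ_{a,b} − 1)·id; (iii) 3·Σ_{a∈C} γ_a∘γ_a = 2·id (i.e. the braided Casimir C = Σ_{a,b} η⁻¹_{ab}(a−e)(b−e) acts as the scalar 2). -/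
section Aux
variable {R : Type*} [Ring R] [Algebra ℂ R]

lemma S3aux_diag {A : R} (h : A * A = 1) :
    ((1/3:ℂ) • (A - 1)) * ((1/3:ℂ) • (A - 1)) + ((1/3:ℂ) • (A - 1)) * ((1/3:ℂ) • (A - 1))
      + (2/3:ℂ) • (((1/3:ℂ) • (A - 1)) + ((1/3:ℂ) • (A - 1))) =
    ((1/3:ℂ) * ((1:ℂ) - 1)) • (1 : R) := by
  have e : (A - 1) * (A - 1) = 1 + 1 - A - A := by
    rw [mul_sub, sub_mul, sub_mul, mul_one, one_mul, h]; noncomm_ring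
  simp only [smul_mul_assoc, mul_smul_comm, smul_smul, e]
  match_scalars <;> ring

lemma S3aux_off {A B : R} (h : A * B + B * A = -1) :
    ((1/3:ℂ) • (A - 1)) * ((1/3:ℂ) • (B - 1)) + ((1/3:ℂ) • (B - 1)) * ((1/3:ℂ) • (A - 1))
      + (2/3:ℂ) • (((1/3:ℂ) • (A - 1)) + ((1/3:ℂ) • (B - 1))) =
    ((1/3:ℂ) * ((0:ℂ) - 1)) • (1 : R) := by
  have hBA : B * A = -1 - A * B := by rw [eq_sub_iff_add_eq, add_comm]; exact h
  have e1 : (A - 1) * (B - 1) = A * B - A - B + 1 := by noncomm_ring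
  have e2 : (B - 1) * (A - 1) = (-1 - A * B) - B - A + 1 := by
    rw [mul_sub, sub_mul, sub_mul, mul_one, one_mul, hBA]; noncomm_ring
  simp only [smul_mul_assoc, mul_smul_comm, smul_smul, e1, e2]
  match_scalars <;> ring

lemma S3aux_sq {A : R} (h : A * A = 1) :
    ((1/3:ℂ) • (A - 1)) * ((1/3:ℂ) • (A - 1)) = (-(2/9):ℂ) • (A - 1) := by
  have e : (A - 1) * (A - 1) = 1 + 1 - A - A := by
    rw [mul_sub, sub_mul, sub_mul, mul_one, one_mul, h]; noncomm_ring
  simp only [smul_mul_assoc, mul_smul_comm, smul_smul, e]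
  match_scalars <;> ring

end Aux

/-- For any representation `ρ` of `S₃` on a complex vector
space `W` with `ρ(uv) − id` bijective, the tautological gamma-matrices
`γ_a = (1/3)(ρ(a) − id)` satisfy: (i) `ρ(u) + ρ(v) + ρ(w) = 0`, equivalently
`Σ_a γ_a = −id`; (ii) `γ_aγ_b + γ_bγ_a + (2/3)(γ_a + γ_b) = (1/3)(δ_{a,b} − 1)·id`
for all `a, b ∈ C`; (iii) `3·Σ_a γ_a² = 2·id` (the braided Casimir acts as `2`). -/
theorem S3_gamma_matrix_identities
    {W : Type*} [AddCommGroup W] [Module ℂ W]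
    (ρ : Equiv.Perm (Fin 3) →* Module.End ℂ W)
    (hbij : Function.Bijective ⇑(ρ (pu * pv) - 1))
    (γ : Equiv.Perm (Fin 3) → Module.End ℂ W)
    (hγ : ∀ a, γ a = (1 / 3 : ℂ) • (ρ a - 1)) :
    (ρ pu + ρ pv + ρ pw = 0 ∧ γ pu + γ pv + γ pw = -1) ∧
    (∀ a ∈ C3, ∀ b ∈ C3,
      γ a * γ b + γ b * γ a + (2 / 3 : ℂ) • (γ a + γ b) =
        ((1 / 3 : ℂ) * ((if a = b then 1 else 0) - 1)) • (1 : Module.End ℂ W)) ∧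
    (3 : ℂ) • (γ pu * γ pu + γ pv * γ pv + γ pw * γ pw) =
      (2 : ℂ) • (1 : Module.End ℂ W) := by
  set s : Module.End ℂ W := ρ (pu * pv) with hs
  -- basic relations
  have hU : ρ pu * ρ pu = 1 := by rw [← map_mul, show pu * pu = 1 by decide, map_one]
  have hV : ρ pv * ρ pv = 1 := by rw [← map_mul, show pv * pv = 1 by decide, map_one]
  have hW : ρ pw * ρ pw = 1 := by rw [← map_mul, show pw * pw = 1 by decide, map_one]
  have hcube : s * s * s = 1 := by
    rw [hs, ← map_mul, ← map_mul, show pu * pv * (pu * pv) * (pu * pv) = 1 by decide, map_one]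
  have h0 : (s - 1) * (1 + s + s * s) = 0 := by
    have hz : (s - 1) * (1 + s + s * s) = s * s * s - 1 := by noncomm_ring
    rw [hz, hcube, sub_self]
  have hS : (1 : Module.End ℂ W) + s + s * s = 0 := by
    ext x
    apply hbij.injective
    show (s - 1) ((1 + s + s * s) x) = (s - 1) ((0 : Module.End ℂ W) x)
    rw [← Module.End.mul_apply, h0]
    simp
  have hkey : s + s * s = -1 := by
    rw [add_assoc] at hS
    exact eq_neg_of_add_eq_zero_right hS
  have hsuv : s = ρ pu * ρ pv := by rw [hs, map_mul]
  -- anticommutation for distinct transpositions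
  have hx : ∀ g h : Equiv.Perm (Fin 3), g * h = pu * pv → h * g = pv * pu →
      ρ g * ρ h + ρ h * ρ g = -1 := by
    intro g h h1 h2
    rw [← map_mul, ← map_mul, h1, h2, show pv * pu = (pu * pv) * (pu * pv) by decide,
      map_mul ρ (pu * pv) (pu * pv), ← hs]
    exact hkey
  have huv : ρ pu * ρ pv + ρ pv * ρ pu = -1 := hx pu pv rfl (by decide)
  have hwu : ρ pw * ρ pu + ρ pu * ρ pw = -1 := hx pw pu (by decide) (by decide)
  have hvw : ρ pv * ρ pw + ρ pw * ρ pv = -1 := hx pv pw (by decide) (by decide)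
  have hvu : ρ pv * ρ pu + ρ pu * ρ pv = -1 := by rw [add_comm]; exact huv
  have huw : ρ pu * ρ pw + ρ pw * ρ pu = -1 := by rw [add_comm]; exact hwu
  have hwv : ρ pw * ρ pv + ρ pv * ρ pw = -1 := by rw [add_comm]; exact hvw
  -- part (i)
  have hWeq : ρ pw = ρ pv * ρ pu * ρ pv := by
    rw [show pw = pv * pu * pv by decide, map_mul, map_mul]
  have hus : ρ pu * s = ρ pv := by rw [hsuv, ← mul_assoc, hU, one_mul]
  have hi : ρ pu + ρ pv + ρ pw = 0 := by
    have h1 : ρ pu * (1 + s + s * s) = ρ pu + ρ pv + ρ pw := by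
      rw [mul_add, mul_add, mul_one, hus, ← mul_assoc, hus, hWeq, hsuv, mul_assoc]
    rw [hS, mul_zero] at h1
    exact h1.symm
  have esum : (ρ pu - 1) + (ρ pv - 1) + (ρ pw - 1)
      = (ρ pu + ρ pv + ρ pw) - (1 + 1 + 1) := by abel
  refine ⟨⟨hi, ?_⟩, ?_, ?_⟩
  · rw [hγ, hγ, hγ, ← smul_add, ← smul_add, esum, hi, zero_sub]
    match_scalars <;> ring
  · intro a ha b hb
    simp only [C3, Finset.mem_insert, Finset.mem_singleton] at ha hb
    rcases ha with rfl | rfl | rfl <;> rcases hb with rfl | rfl | rfl <;>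
      simp only [hγ]
    · rw [if_pos trivial]; exact S3aux_diag hU
    · rw [if_neg (by decide)]; exact S3aux_off huv
    · rw [if_neg (by decide)]; exact S3aux_off huw
    · rw [if_neg (by decide)]; exact S3aux_off hvu
    · rw [if_pos trivial]; exact S3aux_diag hV
    · rw [if_neg (by decide)]; exact S3aux_off hvw
    · rw [if_neg (by decide)]; exact S3aux_off hwu
    · rw [if_neg (by decide)]; exact S3aux_off hwv
    · rw [if_pos trivial]; exact S3aux_diag hW
  · rw [hγ, hγ, hγ, S3aux_sq hU, S3aux_sq hV, S3aux_sq hW, ← smul_add, ← smul_add, esum, hi,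
      zero_sub]
    match_scalars <;> ring
end

section
/- (i) For all g, h ∈ G∖{e}, all x ∈ G and all ψ : G → W: (T_{δ_{xg}}(T_{δ_{xgh}} ψ))(x) = γ_g(γ_h(ψ(xgh))) if both g ∈ C and h ∈ C, and (T_{δ_{xg}}(T_{δ_{xgh}} ψ))(x) = 0 otherwise. (ii) For all y ∈ G, all q ∈ G with q ∉ C and q ≠ e, all x ∈ G and all ψ : G → W: (T_{δ_y}(T_{δ_{yq}} ψ))(x) = −δ_y(x)·Σ_{a,b∈C, ab=q} γ_a(γ_b(ψ(xq))). (These compute, respectively, the Connes representation π_{D̸} on the universal 2-forms e(δ_g)⊗e(δ_h) underlying the Woronowicz relations, and π_{D̸} applied to the differentials of the calculus ideal N_H, in the proof of Theorem 5.4.) -/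
/-!
Evaluating `T_{δ_y} φ` at a point `x ≠ y` picks out the single summand `a = x⁻¹ y`, so it is
`γ_{x⁻¹y}(φ y)` when `x⁻¹ y ∈ C` and `0` otherwise; at `x = y` every `ya` differs from `y`
(as `e ∉ C`), which gives `-Σ_a γ_a(φ(ya))`. Part (i) applies the first formula twice. In
part (ii), for `x ≠ y` the inner operator vanishes at `y` because `q ∉ C`; for `x = y` the
inner operator at `ya` contributes `γ_b` exactly for `b = a⁻¹ q ∈ C`.
-/

open Finset

theorem sum_subtype_ite_coe_eq {α M : Type*} [DecidableEq α] [AddCommMonoid M]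
    (s : Finset α) (c : α) (v : s → M) :
    ∑ b : s, (if (b : α) = c then v b else 0) = if h : c ∈ s then v ⟨c, h⟩ else 0 := by
  split_ifs with hc
  · rw [Fintype.sum_eq_single ⟨c, hc⟩ fun b hb => if_neg fun h => hb (Subtype.ext h)]
    simp
  · exact Fintype.sum_eq_zero _ fun b => if_neg fun (h : (b : α) = c) => hc (h ▸ b.2)

section CommutatorOp

variable {G R W : Type*} [Group G] [DecidableEq G] [Ring R] [AddCommGroup W] [Module R W]
  (C : Finset G) (γ : C → Module.End R W)

def commutatorOp (f : G → R) (ψ : G → W) (x : G) : W :=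
  ∑ a : C, (f (x * a) - f x) • γ a (ψ (x * a))

variable {C}

theorem commutatorOp_single_of_ne {x y : G} (hxy : x ≠ y) (ψ : G → W) :
    commutatorOp C γ (Pi.single y 1) ψ x =
      if h : x⁻¹ * y ∈ C then γ ⟨_, h⟩ (ψ y) else 0 := by
  refine (Fintype.sum_congr _ _ fun a => ?_).trans (sum_subtype_ite_coe_eq C _ fun b => γ b (ψ y))
  by_cases ha : (a : G) = x⁻¹ * y
  · simp [ha, hxy]
  · have hxa : x * a ≠ y := fun h => ha (eq_inv_mul_of_mul_eq h)
    simp [ha, hxa, hxy]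

theorem commutatorOp_single_self (h1 : (1 : G) ∉ C) (x : G) (ψ : G → W) :
    commutatorOp C γ (Pi.single x 1) ψ x = -∑ a : C, γ a (ψ (x * a)) := by
  rw [commutatorOp, ← sum_neg_distrib]
  refine Fintype.sum_congr _ _ fun a => ?_
  have hxa : x * a ≠ x := fun h => h1 (mul_eq_left.mp h ▸ a.2)
  simp [hxa]

theorem commutatorOp_single_mul_single_mul {g h : G} (hg : g ≠ 1) (hh : h ≠ 1) (x : G)
    (ψ : G → W) :
    commutatorOp C γ (Pi.single (x * g) 1) (commutatorOp C γ (Pi.single (x * g * h) 1) ψ) x =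
      if hgC : g ∈ C then
        if hhC : h ∈ C then γ ⟨g, hgC⟩ (γ ⟨h, hhC⟩ (ψ (x * g * h))) else 0
      else 0 := by
  have hx : x ≠ x * g := fun e => hg (left_eq_mul.mp e)
  have hxg : x * g ≠ x * g * h := fun e => hh (left_eq_mul.mp e)
  rw [commutatorOp_single_of_ne γ hx, commutatorOp_single_of_ne γ hxg]
  simp only [inv_mul_cancel_left]
  split_ifs <;> simp

theorem commutatorOp_single_single_mul_of_notMem (h1 : (1 : G) ∉ C) {q : G} (hqC : q ∉ C)
    (hq1 : q ≠ 1) (x y : G) (ψ : G → W) :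
    commutatorOp C γ (Pi.single y 1) (commutatorOp C γ (Pi.single (y * q) 1) ψ) x =
      -((Pi.single y 1 : G → R) x • ∑ a : C, ∑ b : C,
        if (a : G) * b = q then γ a (γ b (ψ (x * q))) else 0) := by
  by_cases hxy : x = y
  · subst hxy
    rw [commutatorOp_single_self γ h1, Pi.single_eq_same, one_smul]
    congr 1
    refine Fintype.sum_congr _ _ fun a => ?_
    have hxa : x * a ≠ x * q := fun e => hqC (mul_left_cancel e ▸ a.2)
    have hcoe : (x * a)⁻¹ * (x * q) = (a : G)⁻¹ * q := by group
    simp only [commutatorOp_single_of_ne γ hxa, hcoe, ← eq_inv_mul_iff_mul_eq]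
    rw [sum_subtype_ite_coe_eq C _ fun b => γ a (γ b (ψ (x * q)))]
    split_ifs <;> simp
  · have hyq : y ≠ y * q := fun e => hq1 (left_eq_mul.mp e)
    rw [Pi.single_eq_of_ne hxy, zero_smul, neg_zero, commutatorOp_single_of_ne γ hxy,
      commutatorOp_single_of_ne γ hyq]
    simp [hqC]

end CommutatorOp

theorem connes_representation_on_universal_two_forms_general
    {G : Type*} [Group G] [DecidableEq G]
    (C : Finset G) (he : (1 : G) ∉ C)
    {W : Type*} [AddCommGroup W] [Module ℂ W]
    (γ : {x // x ∈ C} → Module.End ℂ W)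
    (T : (G → ℂ) → (G → W) → (G → W))
    (hT : ∀ f ψ x, T f ψ x =
      ∑ a : {x // x ∈ C}, (f (x * a) - f x) • γ a (ψ (x * (a : G))))
    (δ : G → G → ℂ) (hδ : ∀ y x, δ y x = if x = y then 1 else 0) :
    (∀ (g h : G), g ≠ 1 → h ≠ 1 → ∀ (x : G) (ψ : G → W),
      (∀ (hg : g ∈ C) (hh : h ∈ C),
        T (δ (x * g)) (T (δ (x * g * h)) ψ) x =
          γ ⟨g, hg⟩ (γ ⟨h, hh⟩ (ψ (x * g * h)))) ∧
      (¬(g ∈ C ∧ h ∈ C) → T (δ (x * g)) (T (δ (x * g * h)) ψ) x = 0)) ∧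
    (∀ (y q : G), q ∉ C → q ≠ 1 → ∀ (x : G) (ψ : G → W),
      T (δ y) (T (δ (y * q)) ψ) x =
        -(δ y x • ∑ a : {x // x ∈ C}, ∑ b : {x // x ∈ C},
          if (a : G) * (b : G) = q then γ a (γ b (ψ (x * q))) else 0)) := by
  obtain rfl : T = commutatorOp C γ := funext₃ hT
  obtain rfl : δ = fun y => Pi.single y 1 := funext₂ fun y x => by simp [hδ, Pi.single_apply]
  refine ⟨fun g h hg hh x ψ => ?_, fun y q hqC hq1 x ψ => ?_⟩
  · rw [commutatorOp_single_mul_single_mul γ hg hh]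
    refine ⟨fun hgC hhC => by simp [hgC, hhC], fun hgh => ?_⟩
    by_cases hgC : g ∈ C
    · simp [hgC, show h ∉ C from fun hhC => hgh ⟨hgC, hhC⟩]
    · simp [hgC]
  · exact commutatorOp_single_single_mul_of_notMem γ he hqC hq1 x y ψ

/-- Let `G` be a finite group, `C` an Ad-stable subset not
containing `e`, `W` a complex vector space and `γ : C → End(W)` any family.
With `(T_f ψ)(x) = Σ_{a∈C} (f(xa) − f(x))·γ_a(ψ(xa))` (the commutator `[D̸, f]`)
and `δ_y` the indicator of `y`:
(i) for `g, h ≠ e`, `(T_{δ_{xg}}(T_{δ_{xgh}} ψ))(x) = γ_g(γ_h(ψ(xgh)))` if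
`g, h ∈ C`, and `= 0` otherwise; (ii) for `q ∉ C ∪ {e}`,
`(T_{δ_y}(T_{δ_{yq}} ψ))(x) = −δ_y(x)·Σ_{ab=q} γ_a(γ_b(ψ(xq)))`. -/
theorem connes_representation_on_universal_two_forms
    {G : Type*} [Group G] [Fintype G] [DecidableEq G]
    (C : Finset G) (hne : C.Nonempty) (he : (1 : G) ∉ C)
    (hconj : ∀ (g c : G), c ∈ C → g * c * g⁻¹ ∈ C)
    {W : Type*} [AddCommGroup W] [Module ℂ W]
    (γ : {x // x ∈ C} → Module.End ℂ W)
    (T : (G → ℂ) → (G → W) → (G → W))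
    (hT : ∀ f ψ x, T f ψ x =
      ∑ a : {x // x ∈ C}, (f (x * a) - f x) • γ a (ψ (x * (a : G))))
    (δ : G → G → ℂ) (hδ : ∀ y x, δ y x = if x = y then 1 else 0) :
    (∀ (g h : G), g ≠ 1 → h ≠ 1 → ∀ (x : G) (ψ : G → W),
      (∀ (hg : g ∈ C) (hh : h ∈ C),
        T (δ (x * g)) (T (δ (x * g * h)) ψ) x =
          γ ⟨g, hg⟩ (γ ⟨h, hh⟩ (ψ (x * g * h)))) ∧
      (¬(g ∈ C ∧ h ∈ C) → T (δ (x * g)) (T (δ (x * g * h)) ψ) x = 0)) ∧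
    (∀ (y q : G), q ∉ C → q ≠ 1 → ∀ (x : G) (ψ : G → W),
      T (δ y) (T (δ (y * q)) ψ) x =
        -(δ y x • ∑ a : {x // x ∈ C}, ∑ b : {x // x ∈ C},
          if (a : G) * (b : G) = q then γ a (γ b (ψ (x * q))) else 0)) :=
  connes_representation_on_universal_two_forms_general C he γ T hT δ hδ
end

section
/- Let Σ be a finite set and F ⊆ Σ×Σ×Σ, and let the algebra A of complex-valued functions on Σ act on the space of functions v : F → ℂ by (f·v·h)(x,y,z) = f(x)·v(x,y,z)·h(z). (a) A linear subspace N of functions on F is stable under both actions if and only if N = {v : for every (x,z) ∈ Σ×Σ, the function y ↦ v(x,y,z) on F_{x,z} := {y : (x,y,z) ∈ F} belongs to N_{x,z}}, where N_{x,z} := {y ↦ v(x,y,z) : v ∈ N}; i.e. sub-bimodules of ℂF are exactly the fibrewise products of subspaces of ℂF_{x,z}. (b) Suppose moreover E ⊆ Σ×Σ with x ≠ y for (x,y) ∈ E, F = {(x,y,z) : (x,y) ∈ E and (y,z) ∈ E}, and for each (x,z) a linear map p_{x,z} : (F_{x,z} → ℂ) → V_{x,z} into some complex vector space is given. Then the condition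 d² = 0, namely that for every f : Σ → ℂ and every (x,z): p_{x,z}(y ↦ (f(y)−f(x)) + (f(z)−f(y)) − χ_E(x,z)·(f(z)−f(x))) = 0, holds if and only if p_{x,z} annihilates the constant function 1 on F_{x,z} for every pair (x,z) with x ≠ z and (x,z) ∉ E. -/
section
variable {S : Type*}

/-- The fibre `F_{x,z} = {y : (x,y,z) ∈ F}`. -/
def fibreSet (F : Set (S × S × S)) (x z : S) : Set S := {y | (x, y, z) ∈ F}

/-- The fibrewise restriction map `(ℂF → ℂ) → (ℂF_{x,z} → ℂ)`. -/
def fibreRestrict (F : Set (S × S × S)) (x z : S) :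
    (F → ℂ) →ₗ[ℂ] (fibreSet F x z → ℂ) where
  toFun v y := v ⟨(x, (y : S), z), y.2⟩
  map_add' _ _ := rfl
  map_smul' _ _ := rfl

end

/-- (a) For a finite set `Σ` and `F ⊆ Σ×Σ×Σ`, with the algebra
of functions acting by `(f·v·h)(x,y,z) = f(x)·v(x,y,z)·h(z)`, a subspace `N` of
`ℂF` is a sub-bimodule iff it is the fibrewise product of its fibrewise images:
`v ∈ N ↔ ∀ x z, (restriction of v to F_{x,z}) ∈ (restriction image of N)`.
(b) For `F` the set of composable pairs of `E` and linear maps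
`p_{x,z} : ℂF_{x,z} → V_{x,z}`, the condition `d² = 0` holds iff `p_{x,z}`
annihilates the constant function `1` for every `(x,z)` with `x ≠ z`,
`(x,z) ∉ E`. -/
theorem finite_set_bimodules_and_d_squared
    {S : Type*} [Fintype S] [DecidableEq S]
    -- part (a)
    (F : Set (S × S × S)) (N : Submodule ℂ (F → ℂ))
    -- part (b)
    (E : Finset (S × S)) (hE : ∀ p ∈ E, p.1 ≠ p.2)
    (FE : Set (S × S × S))
    (hFE : FE = {p : S × S × S | (p.1, p.2.1) ∈ E ∧ (p.2.1, p.2.2) ∈ E})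
    (V : S → S → Type*) [∀ x z, AddCommGroup (V x z)] [∀ x z, Module ℂ (V x z)]
    (p : (x z : S) → ((fibreSet FE x z → ℂ) →ₗ[ℂ] V x z)) :
    ((∀ f : S → ℂ, ∀ v ∈ N,
        (fun q : F => f (q : S × S × S).1 * v q) ∈ N ∧
        (fun q : F => v q * f (q : S × S × S).2.2) ∈ N) ↔
      (∀ v : F → ℂ, v ∈ N ↔ ∀ x z : S,
        fibreRestrict F x z v ∈ Submodule.map (fibreRestrict F x z) N)) ∧
    ((∀ (f : S → ℂ) (x z : S),
        p x z (fun y => ((f (y : S) - f x) + (f z - f (y : S))) -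
          (if (x, z) ∈ E then 1 else 0) * (f z - f x)) = 0) ↔
      (∀ x z : S, x ≠ z → (x, z) ∉ E → p x z (fun _ => 1) = 0)) := by
  constructor
  · constructor
    · intro hN v
      constructor
      · intro hv x z
        exact ⟨v, hv, rfl⟩
      · intro hv
        choose w hwN hw using fun x z => hv x z
        have key : v = ∑ x : S, ∑ z : S,
            (fun q : F => ((if (q : S × S × S).1 = x then (1:ℂ) else 0) * w x z q)
              * (if (q : S × S × S).2.2 = z then (1:ℂ) else 0)) := by
          funext q
          obtain ⟨⟨a, b, c⟩, hq⟩ := q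
          simp only [Finset.sum_apply]
          rw [Finset.sum_eq_single a]
          · rw [Finset.sum_eq_single c]
            · have := congrFun (hw a c) ⟨b, hq⟩
              simpa [fibreRestrict] using this.symm
            · intro z _ hz
              simp [Ne.symm hz]
            · intro h; exact absurd (Finset.mem_univ c) h
          · intro x _ hx
            simp [Ne.symm hx]
          · intro h; exact absurd (Finset.mem_univ a) h
        rw [key]
        refine Submodule.sum_mem _ fun x _ => Submodule.sum_mem _ fun z _ => ?_
        exact (hN (fun s => if s = z then (1:ℂ) else 0)
          (fun q : F => (if (q : S × S × S).1 = x then (1:ℂ) else 0) * w x z q)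
          ((hN (fun s => if s = x then (1:ℂ) else 0) (w x z) (hwN x z)).1)).2
    · intro hchar f v hv
      constructor
      · rw [hchar]
        intro x z
        refine ⟨f x • v, N.smul_mem _ hv, ?_⟩
        funext y
        simp [fibreRestrict]
      · rw [hchar]
        intro x z
        refine ⟨f z • v, N.smul_mem _ hv, ?_⟩
        funext y
        simp [fibreRestrict, mul_comm]
  · constructor
    · intro h x z hxz hmem
      have := h (fun s => if s = z then (1:ℂ) else 0) x z
      have heq : (fun y : fibreSet FE x z =>
          (((if (y:S) = z then (1:ℂ) else 0) - (if x = z then (1:ℂ) else 0)) +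
            ((if z = z then (1:ℂ) else 0) - (if (y:S) = z then (1:ℂ) else 0))) -
          (if (x, z) ∈ E then (1:ℂ) else 0) *
            ((if z = z then (1:ℂ) else 0) - (if x = z then (1:ℂ) else 0)))
          = (fun _ => (1:ℂ)) := by
        funext y
        simp [hxz, hmem]
      rw [heq] at this
      exact this
    · intro h f x z
      by_cases hxz : x = z
      · subst hxz
        have heq : (fun y : fibreSet FE x x => ((f (y:S) - f x) + (f x - f (y:S))) -
            (if (x, x) ∈ E then (1:ℂ) else 0) * (f x - f x)) = 0 := by
          funext y; simp
        rw [heq, map_zero]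
      · by_cases hmem : (x, z) ∈ E
        · have heq : (fun y : fibreSet FE x z => ((f (y:S) - f x) + (f z - f (y:S))) -
              (if (x, z) ∈ E then (1:ℂ) else 0) * (f z - f x)) = 0 := by
            funext y; simp [hmem]
          rw [heq, map_zero]
        · have heq : (fun y : fibreSet FE x z => ((f (y:S) - f x) + (f z - f (y:S))) -
              (if (x, z) ∈ E then (1:ℂ) else 0) * (f z - f x))
              = (f z - f x) • (fun _ => (1:ℂ)) := by
            funext y; simp [hmem]
          rw [heq, map_smul, h x z hxz hmem, smul_zero]
end

section
/- Let k be a field, M and H unital associative k-algebras, Ω¹M := ker(multiplication : M⊗M → M) and Ω¹H := ker(multiplication : H⊗H → H), and let N_M ⊆ Ω¹M, N_H ⊆ Ω¹H be k-subspaces. Under the canonical linear isomorphism (M⊗H)⊗(M⊗H) ≅ (M⊗M)⊗(H⊗H) (exchanging the middle factors), define N_P := N_M⊗(H⊗H) + (M⊗M)⊗N_H + Ω¹M⊗Ω¹H. Then: (i) N_P is the internal direct sum N_M⊗(1⊗H) ⊕ (M⊗1)⊗N_H ⊕ Ω¹M⊗Ω¹H, where N_M⊗(1⊗H) denotes the span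 of ν⊗(1_H⊗h) for ν ∈ N_M, h ∈ H, and (M⊗1)⊗N_H the span of (m⊗1_M)⊗ξ for m ∈ M, ξ ∈ N_H; (ii) N_P ∩ (Ω¹M⊗(1⊗1)) = N_M⊗(1⊗1); (iii) N_P ∩ (Ω¹M⊗(H⊗1)) = N_M⊗(H⊗1) and N_P ∩ (Ω¹M⊗(1⊗H)) = N_M⊗(1⊗H); (iv) if N_M and N_H are sub-bimodules of M⊗M and H⊗H respectively, then N_P corresponds to a sub-bimodule of (M⊗H)⊗(M⊗H) contained in ker(multiplication : (M⊗H)⊗(M⊗H) → M⊗H). -/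
open scoped TensorProduct
open TensorProduct LinearMap

section Aux
variable {k : Type*} [Field k] {V : Type*} [AddCommGroup V] [Module k V]

private lemma span_fix (F : V →ₗ[k] V) (s : Set V)
    (h : ∀ x ∈ s, F x = x) : ∀ y ∈ Submodule.span k s, F y = y := by
  intro y hy
  induction hy using Submodule.span_induction with
  | mem x hx => exact h x hx
  | zero => simp
  | add a b _ _ ha hb => simp [map_add, ha, hb]
  | smul c a _ ha => simp [map_smul, ha]

private lemma exists_one_functional {H : Type*} [Ring H] [Algebra k H] (h1 : (1 : H) ≠ 0) :
    ∃ f : H →ₗ[k] k, f 1 = 1 := by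
  obtain ⟨g, hg⟩ := (LinearMap.toSpanSingleton k H 1).exists_leftInverse_of_injective (by
    rw [LinearMap.ker_eq_bot']
    intro c hc
    rw [LinearMap.toSpanSingleton_apply] at hc
    rcases smul_eq_zero.mp hc with h | h
    · exact h
    · exact absurd h h1)
  refine ⟨g, ?_⟩
  have := LinearMap.congr_fun hg 1
  simpa [LinearMap.toSpanSingleton_apply] using this

end Aux

set_option maxHeartbeats 2000000
set_option synthInstance.maxHeartbeats 400000

/-- For unital `k`-algebras `M, H` with universal 1-forms
`Ω¹M = ker(mult)`, `Ω¹H = ker(mult)` and subspaces `N_M ⊆ Ω¹M`, `N_H ⊆ Ω¹H`, the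
subspace `N_P = N_M⊗(H⊗H) + (M⊗M)⊗N_H + Ω¹M⊗Ω¹H` of `(M⊗M)⊗(H⊗H)` satisfies:
(i) it is the internal direct sum `N_M⊗(1⊗H) ⊕ (M⊗1)⊗N_H ⊕ Ω¹M⊗Ω¹H`;
(ii) `N_P ∩ (Ω¹M⊗(1⊗1)) = N_M⊗(1⊗1)`;
(iii) `N_P ∩ (Ω¹M⊗(H⊗1)) = N_M⊗(H⊗1)` and `N_P ∩ (Ω¹M⊗(1⊗H)) = N_M⊗(1⊗H)`;
(iv) if `N_M, N_H` are sub-bimodules then, transporting `N_P` to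
`(M⊗H)⊗(M⊗H)` by the middle-exchange isomorphism, it is a sub-bimodule
contained in the kernel of the multiplication of `M⊗H`. -/
theorem tensor_product_bundle_calculus
    (k : Type*) [Field k]
    (M : Type*) [Ring M] [Algebra k M] (H : Type*) [Ring H] [Algebra k H]
    (OM : Submodule k (M ⊗[k] M)) (hOM : OM = LinearMap.ker (LinearMap.mul' k M))
    (OH : Submodule k (H ⊗[k] H)) (hOH : OH = LinearMap.ker (LinearMap.mul' k H))
    (NM : Submodule k (M ⊗[k] M)) (hNM : NM ≤ OM)
    (NH : Submodule k (H ⊗[k] H)) (hNH : NH ≤ OH)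
    (NP : Submodule k ((M ⊗[k] M) ⊗[k] (H ⊗[k] H)))
    (hNP : NP =
      Submodule.span k {x | ∃ ν ∈ NM, ∃ t : H ⊗[k] H, x = ν ⊗ₜ[k] t} ⊔
      Submodule.span k {x | ∃ s : M ⊗[k] M, ∃ ξ ∈ NH, x = s ⊗ₜ[k] ξ} ⊔
      Submodule.span k {x | ∃ ω ∈ OM, ∃ ξ ∈ OH, x = ω ⊗ₜ[k] ξ})
    (A₁ : Submodule k ((M ⊗[k] M) ⊗[k] (H ⊗[k] H)))
    (hA₁ : A₁ = Submodule.span k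
      {x | ∃ ν ∈ NM, ∃ h : H, x = ν ⊗ₜ[k] ((1 : H) ⊗ₜ[k] h)})
    (A₂ : Submodule k ((M ⊗[k] M) ⊗[k] (H ⊗[k] H)))
    (hA₂ : A₂ = Submodule.span k
      {x | ∃ m : M, ∃ ξ ∈ NH, x = (m ⊗ₜ[k] (1 : M)) ⊗ₜ[k] ξ})
    (A₃ : Submodule k ((M ⊗[k] M) ⊗[k] (H ⊗[k] H)))
    (hA₃ : A₃ = Submodule.span k {x | ∃ ω ∈ OM, ∃ ξ ∈ OH, x = ω ⊗ₜ[k] ξ}) :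
    -- (i) internal direct sum decomposition
    (NP = A₁ ⊔ A₂ ⊔ A₃ ∧ iSupIndep ![A₁, A₂, A₃]) ∧
    -- (ii)
    (NP ⊓ Submodule.span k
        {x | ∃ ω ∈ OM, x = ω ⊗ₜ[k] ((1 : H) ⊗ₜ[k] (1 : H))} =
      Submodule.span k
        {x | ∃ ν ∈ NM, x = ν ⊗ₜ[k] ((1 : H) ⊗ₜ[k] (1 : H))}) ∧
    -- (iii)
    (NP ⊓ Submodule.span k
        {x | ∃ ω ∈ OM, ∃ h : H, x = ω ⊗ₜ[k] (h ⊗ₜ[k] (1 : H))} =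
      Submodule.span k
        {x | ∃ ν ∈ NM, ∃ h : H, x = ν ⊗ₜ[k] (h ⊗ₜ[k] (1 : H))} ∧
     NP ⊓ Submodule.span k
        {x | ∃ ω ∈ OM, ∃ h : H, x = ω ⊗ₜ[k] ((1 : H) ⊗ₜ[k] h)} =
      Submodule.span k
        {x | ∃ ν ∈ NM, ∃ h : H, x = ν ⊗ₜ[k] ((1 : H) ⊗ₜ[k] h)}) ∧
    -- (iv)
    ((∀ m : M,
        Submodule.map (TensorProduct.map (LinearMap.mulLeft k m) LinearMap.id) NM ≤ NM ∧
        Submodule.map (TensorProduct.map LinearMap.id (LinearMap.mulRight k m)) NM ≤ NM) →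
     (∀ h : H,
        Submodule.map (TensorProduct.map (LinearMap.mulLeft k h) LinearMap.id) NH ≤ NH ∧
        Submodule.map (TensorProduct.map LinearMap.id (LinearMap.mulRight k h)) NH ≤ NH) →
     (Submodule.map (TensorProduct.tensorTensorTensorComm k M H M H).symm.toLinearMap NP ≤
        LinearMap.ker (LinearMap.mul' k (M ⊗[k] H)) ∧
      ∀ q : M ⊗[k] H,
        Submodule.map (TensorProduct.map (LinearMap.mulLeft k q) LinearMap.id)
          (Submodule.map (TensorProduct.tensorTensorTensorComm k M H M H).symm.toLinearMap NP) ≤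
          Submodule.map (TensorProduct.tensorTensorTensorComm k M H M H).symm.toLinearMap NP ∧
        Submodule.map (TensorProduct.map LinearMap.id (LinearMap.mulRight k q))
          (Submodule.map (TensorProduct.tensorTensorTensorComm k M H M H).symm.toLinearMap NP) ≤
          Submodule.map (TensorProduct.tensorTensorTensorComm k M H M H).symm.toLinearMap NP)) := by
  classical
  -- basic membership facts
  have memNM : ∀ ν ∈ NM, LinearMap.mul' k M ν = 0 := by
    intro ν hν; have := hNM hν; rw [hOM, LinearMap.mem_ker] at this; exact this
  have memNH : ∀ ξ ∈ NH, LinearMap.mul' k H ξ = 0 := by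
    intro ξ hξ; have := hNH hξ; rw [hOH, LinearMap.mem_ker] at this; exact this
  have memOM : ∀ ω ∈ OM, LinearMap.mul' k M ω = 0 := by
    intro ω hω; rw [hOM, LinearMap.mem_ker] at hω; exact hω
  have memOH : ∀ ξ ∈ OH, LinearMap.mul' k H ξ = 0 := by
    intro ξ hξ; rw [hOH, LinearMap.mem_ker] at hξ; exact hξ
  -- generators of NP
  have hgen1 : ∀ ν ∈ NM, ∀ t : H ⊗[k] H, ν ⊗ₜ[k] t ∈ NP := by
    intro ν hν t; rw [hNP]
    exact Submodule.mem_sup_left (Submodule.mem_sup_left (Submodule.subset_span ⟨ν, hν, t, rfl⟩))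
  have hgen2 : ∀ s : M ⊗[k] M, ∀ ξ ∈ NH, s ⊗ₜ[k] ξ ∈ NP := by
    intro s ξ hξ; rw [hNP]
    exact Submodule.mem_sup_left (Submodule.mem_sup_right (Submodule.subset_span ⟨s, ξ, hξ, rfl⟩))
  have hgen3 : ∀ ω ∈ OM, ∀ ξ ∈ OH, ω ⊗ₜ[k] ξ ∈ NP := by
    intro ω hω ξ hξ; rw [hNP]
    exact Submodule.mem_sup_right (Submodule.subset_span ⟨ω, hω, ξ, hξ, rfl⟩)
  -- complements of the unit lines
  have hOHc1 : ∀ t : H ⊗[k] H, t - (1 : H) ⊗ₜ[k] (LinearMap.mul' k H t) ∈ OH := by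
    intro t
    rw [hOH, LinearMap.mem_ker, map_sub, LinearMap.mul'_apply, one_mul, sub_self]
  have hOMc2 : ∀ s : M ⊗[k] M, s - (LinearMap.mul' k M s) ⊗ₜ[k] (1 : M) ∈ OM := by
    intro s
    rw [hOM, LinearMap.mem_ker, map_sub, LinearMap.mul'_apply, mul_one, sub_self]
  -- the projection maps
  set P₁ : (M ⊗[k] M) ⊗[k] (H ⊗[k] H) →ₗ[k] (M ⊗[k] M) ⊗[k] (H ⊗[k] H) :=
    TensorProduct.map LinearMap.id ((TensorProduct.mk k H H 1) ∘ₗ LinearMap.mul' k H) with hP₁def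
  have hP₁ : ∀ (s : M ⊗[k] M) (t : H ⊗[k] H),
      P₁ (s ⊗ₜ[k] t) = s ⊗ₜ[k] ((1 : H) ⊗ₜ[k] (LinearMap.mul' k H t)) := by
    intro s t; rw [hP₁def, TensorProduct.map_tmul]; rfl
  set Q₁ : (M ⊗[k] M) ⊗[k] (H ⊗[k] H) →ₗ[k] (M ⊗[k] M) ⊗[k] (H ⊗[k] H) :=
    TensorProduct.map LinearMap.id (((TensorProduct.mk k H H).flip 1) ∘ₗ LinearMap.mul' k H) with hQ₁def
  have hQ₁ : ∀ (s : M ⊗[k] M) (t : H ⊗[k] H),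
      Q₁ (s ⊗ₜ[k] t) = s ⊗ₜ[k] ((LinearMap.mul' k H t) ⊗ₜ[k] (1 : H)) := by
    intro s t; rw [hQ₁def, TensorProduct.map_tmul]; rfl
  set P₂ : (M ⊗[k] M) ⊗[k] (H ⊗[k] H) →ₗ[k] (M ⊗[k] M) ⊗[k] (H ⊗[k] H) :=
    TensorProduct.map (((TensorProduct.mk k M M).flip 1) ∘ₗ LinearMap.mul' k M) LinearMap.id with hP₂def
  have hP₂ : ∀ (s : M ⊗[k] M) (t : H ⊗[k] H),
      P₂ (s ⊗ₜ[k] t) = ((LinearMap.mul' k M s) ⊗ₜ[k] (1 : M)) ⊗ₜ[k] t := by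
    intro s t; rw [hP₂def, TensorProduct.map_tmul]; rfl
  set Qd : (M ⊗[k] M) ⊗[k] (H ⊗[k] H) →ₗ[k] (M ⊗[k] M) ⊗[k] (H ⊗[k] H) :=
    TensorProduct.map
      (LinearMap.id - ((TensorProduct.mk k M M).flip 1) ∘ₗ LinearMap.mul' k M)
      (LinearMap.id - (TensorProduct.mk k H H 1) ∘ₗ LinearMap.mul' k H) with hQddef
  have hQd : ∀ (s : M ⊗[k] M) (t : H ⊗[k] H),
      Qd (s ⊗ₜ[k] t) = (s - (LinearMap.mul' k M s) ⊗ₜ[k] (1 : M)) ⊗ₜ[k]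
        (t - (1 : H) ⊗ₜ[k] (LinearMap.mul' k H t)) := by
    intro s t; rw [hQddef, TensorProduct.map_tmul]; rfl
  -- (i) first part : NP = A₁ ⊔ A₂ ⊔ A₃
  have hNPeq : NP = A₁ ⊔ A₂ ⊔ A₃ := by
    rw [hNP, hA₁, hA₂, hA₃]
    apply le_antisymm
    · refine sup_le (sup_le ?_ ?_) le_sup_right
      · rw [Submodule.span_le]
        rintro x ⟨ν, hν, t, rfl⟩
        have hdec : ν ⊗ₜ[k] t = ν ⊗ₜ[k] ((1 : H) ⊗ₜ[k] (LinearMap.mul' k H t))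
            + ν ⊗ₜ[k] (t - (1 : H) ⊗ₜ[k] (LinearMap.mul' k H t)) := by
          rw [← TensorProduct.tmul_add]
          congr 1
          abel
        rw [SetLike.mem_coe, hdec]
        refine Submodule.add_mem _ ?_ ?_
        · exact Submodule.mem_sup_left (Submodule.mem_sup_left
            (Submodule.subset_span ⟨ν, hν, _, rfl⟩))
        · exact Submodule.mem_sup_right
            (Submodule.subset_span ⟨ν, hNM hν, _, hOHc1 t, rfl⟩)
      · rw [Submodule.span_le]
        rintro x ⟨s, ξ, hξ, rfl⟩
        have hdec : s ⊗ₜ[k] ξ = ((LinearMap.mul' k M s) ⊗ₜ[k] (1 : M)) ⊗ₜ[k] ξ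
            + (s - (LinearMap.mul' k M s) ⊗ₜ[k] (1 : M)) ⊗ₜ[k] ξ := by
          rw [← TensorProduct.add_tmul]
          congr 1
          abel
        rw [SetLike.mem_coe, hdec]
        refine Submodule.add_mem _ ?_ ?_
        · exact Submodule.mem_sup_left (Submodule.mem_sup_right
            (Submodule.subset_span ⟨_, ξ, hξ, rfl⟩))
        · exact Submodule.mem_sup_right
            (Submodule.subset_span ⟨_, hOMc2 s, ξ, hNH hξ, rfl⟩)
    · refine sup_le (sup_le ?_ ?_) le_sup_right
      · rw [Submodule.span_le]
        rintro x ⟨ν, hν, h, rfl⟩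
        exact Submodule.mem_sup_left (Submodule.mem_sup_left
          (Submodule.subset_span ⟨ν, hν, _, rfl⟩))
      · rw [Submodule.span_le]
        rintro x ⟨m, ξ, hξ, rfl⟩
        exact Submodule.mem_sup_left (Submodule.mem_sup_right
          (Submodule.subset_span ⟨_, ξ, hξ, rfl⟩))
  -- projections fix/kill the pieces
  have fix1 : ∀ x ∈ A₁, P₁ x = x := by
    rw [hA₁]
    refine span_fix _ _ ?_
    rintro x ⟨ν, hν, h, rfl⟩
    rw [hP₁, LinearMap.mul'_apply, one_mul]
  have kill1 : ∀ x, (x ∈ A₂ ∨ x ∈ A₃) → P₁ x = 0 := by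
    have k2 : A₂ ≤ LinearMap.ker P₁ := by
      rw [hA₂, Submodule.span_le]
      rintro x ⟨m, ξ, hξ, rfl⟩
      rw [SetLike.mem_coe, LinearMap.mem_ker, hP₁, memNH ξ hξ, TensorProduct.tmul_zero,
        TensorProduct.tmul_zero]
    have k3 : A₃ ≤ LinearMap.ker P₁ := by
      rw [hA₃, Submodule.span_le]
      rintro x ⟨ω, hω, ξ, hξ, rfl⟩
      rw [SetLike.mem_coe, LinearMap.mem_ker, hP₁, memOH ξ hξ, TensorProduct.tmul_zero,
        TensorProduct.tmul_zero]
    rintro x (hx | hx)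
    · exact k2 hx
    · exact k3 hx
  have fix2 : ∀ x ∈ A₂, P₂ x = x := by
    rw [hA₂]
    refine span_fix _ _ ?_
    rintro x ⟨m, ξ, hξ, rfl⟩
    rw [hP₂, LinearMap.mul'_apply, mul_one]
  have kill2 : ∀ x, (x ∈ A₁ ∨ x ∈ A₃) → P₂ x = 0 := by
    have k1 : A₁ ≤ LinearMap.ker P₂ := by
      rw [hA₁, Submodule.span_le]
      rintro x ⟨ν, hν, h, rfl⟩
      rw [SetLike.mem_coe, LinearMap.mem_ker, hP₂, memNM ν hν, TensorProduct.zero_tmul,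
        TensorProduct.zero_tmul]
    have k3 : A₃ ≤ LinearMap.ker P₂ := by
      rw [hA₃, Submodule.span_le]
      rintro x ⟨ω, hω, ξ, hξ, rfl⟩
      rw [SetLike.mem_coe, LinearMap.mem_ker, hP₂, memOM ω hω, TensorProduct.zero_tmul,
        TensorProduct.zero_tmul]
    rintro x (hx | hx)
    · exact k1 hx
    · exact k3 hx
  have fix3 : ∀ x ∈ A₃, Qd x = x := by
    rw [hA₃]
    refine span_fix _ _ ?_
    rintro x ⟨ω, hω, ξ, hξ, rfl⟩
    rw [hQd, memOM ω hω, memOH ξ hξ, TensorProduct.zero_tmul, TensorProduct.tmul_zero,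
      sub_zero, sub_zero]
  have kill3 : ∀ x, (x ∈ A₁ ∨ x ∈ A₂) → Qd x = 0 := by
    have k1 : A₁ ≤ LinearMap.ker Qd := by
      rw [hA₁, Submodule.span_le]
      rintro x ⟨ν, hν, h, rfl⟩
      rw [SetLike.mem_coe, LinearMap.mem_ker, hQd, LinearMap.mul'_apply, one_mul, sub_self,
        TensorProduct.tmul_zero]
    have k2 : A₂ ≤ LinearMap.ker Qd := by
      rw [hA₂, Submodule.span_le]
      rintro x ⟨m, ξ, hξ, rfl⟩
      rw [SetLike.mem_coe, LinearMap.mem_ker, hQd, LinearMap.mul'_apply, mul_one, sub_self,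
        TensorProduct.zero_tmul]
    rintro x (hx | hx)
    · exact k1 hx
    · exact k2 hx
  -- disjointness
  have d1 : Disjoint A₁ (A₂ ⊔ A₃) := by
    rw [Submodule.disjoint_def]
    intro x hx1 hx23
    have hker : A₂ ⊔ A₃ ≤ LinearMap.ker P₁ := by
      refine sup_le ?_ ?_ <;> intro y hy
      · exact LinearMap.mem_ker.mpr (kill1 y (Or.inl hy))
      · exact LinearMap.mem_ker.mpr (kill1 y (Or.inr hy))
    have := LinearMap.mem_ker.mp (hker hx23)
    rw [← fix1 x hx1, this]
  have d2 : Disjoint A₂ (A₁ ⊔ A₃) := by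
    rw [Submodule.disjoint_def]
    intro x hx2 hx13
    have hker : A₁ ⊔ A₃ ≤ LinearMap.ker P₂ := by
      refine sup_le ?_ ?_ <;> intro y hy
      · exact LinearMap.mem_ker.mpr (kill2 y (Or.inl hy))
      · exact LinearMap.mem_ker.mpr (kill2 y (Or.inr hy))
    have := LinearMap.mem_ker.mp (hker hx13)
    rw [← fix2 x hx2, this]
  have d3 : Disjoint A₃ (A₁ ⊔ A₂) := by
    rw [Submodule.disjoint_def]
    intro x hx3 hx12
    have hker : A₁ ⊔ A₂ ≤ LinearMap.ker Qd := by
      refine sup_le ?_ ?_ <;> intro y hy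
      · exact LinearMap.mem_ker.mpr (kill3 y (Or.inl hy))
      · exact LinearMap.mem_ker.mpr (kill3 y (Or.inr hy))
    have := LinearMap.mem_ker.mp (hker hx12)
    rw [← fix3 x hx3, this]
  have indep : iSupIndep ![A₁, A₂, A₃] := by
    rw [iSupIndep_def]
    intro i
    fin_cases i
    · refine Disjoint.mono_right ?_ d1
      refine iSup_le fun j => iSup_le fun hj => ?_
      fin_cases j
      · simp at hj
      · simp only [Matrix.cons_val_one, Matrix.head_cons]; exact le_sup_left
      · simp only [Matrix.cons_val_two, Matrix.tail_cons, Matrix.head_cons]; exact le_sup_right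
    · refine Disjoint.mono_right ?_ d2
      refine iSup_le fun j => iSup_le fun hj => ?_
      fin_cases j
      · simp only [Matrix.cons_val_zero]; exact le_sup_left
      · simp at hj
      · simp only [Matrix.cons_val_two, Matrix.tail_cons, Matrix.head_cons]; exact le_sup_right
    · refine Disjoint.mono_right ?_ d3
      refine iSup_le fun j => iSup_le fun hj => ?_
      fin_cases j
      · simp only [Matrix.cons_val_zero]; exact le_sup_left
      · simp only [Matrix.cons_val_one, Matrix.head_cons]; exact le_sup_right
      · simp at hj
  refine ⟨⟨hNPeq, indep⟩, ?_, ?_, ?_⟩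
  · -- (ii)
    apply le_antisymm
    · by_cases h1H : (1 : H) = 0
      · haveI : Subsingleton H := subsingleton_of_zero_eq_one h1H.symm
        intro x hx
        have hx0 : x = 0 := Subsingleton.elim x 0
        rw [hx0]; exact Submodule.zero_mem _
      · obtain ⟨f, hf⟩ := exists_one_functional (k := k) h1H
        set g : H ⊗[k] H →ₗ[k] H ⊗[k] H :=
          (LinearMap.toSpanSingleton k (H ⊗[k] H) ((1:H) ⊗ₜ[k] (1:H))) ∘ₗ
            (f ∘ₗ LinearMap.mul' k H) with hgdef
        set G := TensorProduct.map (LinearMap.id : M ⊗[k] M →ₗ[k] M ⊗[k] M) g with hGdef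
        have hGapp : ∀ (s : M ⊗[k] M) (t : H ⊗[k] H),
            G (s ⊗ₜ[k] t) = (f (LinearMap.mul' k H t)) • (s ⊗ₜ[k] ((1:H) ⊗ₜ[k] (1:H))) := by
          intro s t
          rw [hGdef, TensorProduct.map_tmul]
          simp [hgdef, LinearMap.toSpanSingleton_apply, TensorProduct.tmul_smul]
        have hGNP : Submodule.map G NP ≤ Submodule.span k
            {x | ∃ ν ∈ NM, x = ν ⊗ₜ[k] ((1:H) ⊗ₜ[k] (1:H))} := by
          rw [hNP, Submodule.map_sup, Submodule.map_sup]
          refine sup_le (sup_le ?_ ?_) ?_ <;> rw [Submodule.map_span_le]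
          · rintro x ⟨ν, hν, t, rfl⟩
            rw [hGapp]
            exact Submodule.smul_mem _ _ (Submodule.subset_span ⟨ν, hν, rfl⟩)
          · rintro x ⟨s, ξ, hξ, rfl⟩
            rw [hGapp, memNH ξ hξ, map_zero, zero_smul]
            exact Submodule.zero_mem _
          · rintro x ⟨ω, hω, ξ, hξ, rfl⟩
            rw [hGapp, memOH ξ hξ, map_zero, zero_smul]
            exact Submodule.zero_mem _
        have hGfix : ∀ x ∈ Submodule.span k
            {x | ∃ ω ∈ OM, x = ω ⊗ₜ[k] ((1:H) ⊗ₜ[k] (1:H))}, G x = x := by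
          refine span_fix _ _ ?_
          rintro x ⟨ω, hω, rfl⟩
          rw [hGapp, LinearMap.mul'_apply, one_mul, hf, one_smul]
        intro x hx
        obtain ⟨hx1, hx2⟩ := Submodule.mem_inf.mp hx
        rw [← hGfix x hx2]
        exact hGNP ⟨x, hx1, rfl⟩
    · refine le_inf ?_ ?_
      · rw [Submodule.span_le]; rintro x ⟨ν, hν, rfl⟩
        exact hgen1 ν hν _
      · rw [Submodule.span_le]; rintro x ⟨ν, hν, rfl⟩
        exact Submodule.subset_span ⟨ν, hNM hν, rfl⟩
  · -- (iii)
    constructor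
    · apply le_antisymm
      · have hQNP : Submodule.map Q₁ NP ≤ Submodule.span k
            {x | ∃ ν ∈ NM, ∃ h : H, x = ν ⊗ₜ[k] (h ⊗ₜ[k] (1:H))} := by
          rw [hNP, Submodule.map_sup, Submodule.map_sup]
          refine sup_le (sup_le ?_ ?_) ?_ <;> rw [Submodule.map_span_le]
          · rintro x ⟨ν, hν, t, rfl⟩
            rw [hQ₁]
            exact Submodule.subset_span ⟨ν, hν, _, rfl⟩
          · rintro x ⟨s, ξ, hξ, rfl⟩
            rw [hQ₁, memNH ξ hξ, TensorProduct.zero_tmul, TensorProduct.tmul_zero]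
            exact Submodule.zero_mem _
          · rintro x ⟨ω, hω, ξ, hξ, rfl⟩
            rw [hQ₁, memOH ξ hξ, TensorProduct.zero_tmul, TensorProduct.tmul_zero]
            exact Submodule.zero_mem _
        have hQfix : ∀ x ∈ Submodule.span k
            {x | ∃ ω ∈ OM, ∃ h : H, x = ω ⊗ₜ[k] (h ⊗ₜ[k] (1:H))}, Q₁ x = x := by
          refine span_fix _ _ ?_
          rintro x ⟨ω, hω, h, rfl⟩
          rw [hQ₁, LinearMap.mul'_apply, mul_one]
        intro x hx
        obtain ⟨hx1, hx2⟩ := Submodule.mem_inf.mp hx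
        rw [← hQfix x hx2]
        exact hQNP ⟨x, hx1, rfl⟩
      · refine le_inf ?_ ?_
        · rw [Submodule.span_le]; rintro x ⟨ν, hν, h, rfl⟩
          exact hgen1 ν hν _
        · rw [Submodule.span_le]; rintro x ⟨ν, hν, h, rfl⟩
          exact Submodule.subset_span ⟨ν, hNM hν, h, rfl⟩
    · apply le_antisymm
      · have hPNP : Submodule.map P₁ NP ≤ Submodule.span k
            {x | ∃ ν ∈ NM, ∃ h : H, x = ν ⊗ₜ[k] ((1:H) ⊗ₜ[k] h)} := by
          rw [hNP, Submodule.map_sup, Submodule.map_sup]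
          refine sup_le (sup_le ?_ ?_) ?_ <;> rw [Submodule.map_span_le]
          · rintro x ⟨ν, hν, t, rfl⟩
            rw [hP₁]
            exact Submodule.subset_span ⟨ν, hν, _, rfl⟩
          · rintro x ⟨s, ξ, hξ, rfl⟩
            rw [hP₁, memNH ξ hξ, TensorProduct.tmul_zero, TensorProduct.tmul_zero]
            exact Submodule.zero_mem _
          · rintro x ⟨ω, hω, ξ, hξ, rfl⟩
            rw [hP₁, memOH ξ hξ, TensorProduct.tmul_zero, TensorProduct.tmul_zero]
            exact Submodule.zero_mem _
        have hPfix : ∀ x ∈ Submodule.span k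
            {x | ∃ ω ∈ OM, ∃ h : H, x = ω ⊗ₜ[k] ((1:H) ⊗ₜ[k] h)}, P₁ x = x := by
          refine span_fix _ _ ?_
          rintro x ⟨ω, hω, h, rfl⟩
          rw [hP₁, LinearMap.mul'_apply, one_mul]
        intro x hx
        obtain ⟨hx1, hx2⟩ := Submodule.mem_inf.mp hx
        rw [← hPfix x hx2]
        exact hPNP ⟨x, hx1, rfl⟩
      · refine le_inf ?_ ?_
        · rw [Submodule.span_le]; rintro x ⟨ν, hν, h, rfl⟩
          exact hgen1 ν hν _
        · rw [Submodule.span_le]; rintro x ⟨ν, hν, h, rfl⟩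
          exact Submodule.subset_span ⟨ν, hNM hν, h, rfl⟩
  · -- (iv)
    intro hMbi hHbi
    set c := TensorProduct.tensorTensorTensorComm k M H M H with hcdef
    -- stability of OM, OH under one-sided multiplications
    have stabOML : ∀ m : M, ∀ ω ∈ OM,
        TensorProduct.map (LinearMap.mulLeft k m) LinearMap.id ω ∈ OM := by
      intro m ω hω
      have hcomm : (LinearMap.mul' k M) ∘ₗ TensorProduct.map (LinearMap.mulLeft k m) LinearMap.id
          = (LinearMap.mulLeft k m) ∘ₗ LinearMap.mul' k M :=
        TensorProduct.ext' (fun a b => by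
          simp [LinearMap.mul'_apply, LinearMap.mulLeft_apply, mul_assoc])
      rw [hOM, LinearMap.mem_ker] at hω ⊢
      rw [← LinearMap.comp_apply, hcomm, LinearMap.comp_apply, hω, map_zero]
    have stabOMR : ∀ m : M, ∀ ω ∈ OM,
        TensorProduct.map LinearMap.id (LinearMap.mulRight k m) ω ∈ OM := by
      intro m ω hω
      have hcomm : (LinearMap.mul' k M) ∘ₗ TensorProduct.map LinearMap.id (LinearMap.mulRight k m)
          = (LinearMap.mulRight k m) ∘ₗ LinearMap.mul' k M :=
        TensorProduct.ext' (fun a b => by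
          simp [LinearMap.mul'_apply, LinearMap.mulRight_apply, mul_assoc])
      rw [hOM, LinearMap.mem_ker] at hω ⊢
      rw [← LinearMap.comp_apply, hcomm, LinearMap.comp_apply, hω, map_zero]
    have stabOHL : ∀ h : H, ∀ ξ ∈ OH,
        TensorProduct.map (LinearMap.mulLeft k h) LinearMap.id ξ ∈ OH := by
      intro h ξ hξ
      have hcomm : (LinearMap.mul' k H) ∘ₗ TensorProduct.map (LinearMap.mulLeft k h) LinearMap.id
          = (LinearMap.mulLeft k h) ∘ₗ LinearMap.mul' k H :=
        TensorProduct.ext' (fun a b => by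
          simp [LinearMap.mul'_apply, LinearMap.mulLeft_apply, mul_assoc])
      rw [hOH, LinearMap.mem_ker] at hξ ⊢
      rw [← LinearMap.comp_apply, hcomm, LinearMap.comp_apply, hξ, map_zero]
    have stabOHR : ∀ h : H, ∀ ξ ∈ OH,
        TensorProduct.map LinearMap.id (LinearMap.mulRight k h) ξ ∈ OH := by
      intro h ξ hξ
      have hcomm : (LinearMap.mul' k H) ∘ₗ TensorProduct.map LinearMap.id (LinearMap.mulRight k h)
          = (LinearMap.mulRight k h) ∘ₗ LinearMap.mul' k H :=
        TensorProduct.ext' (fun a b => by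
          simp [LinearMap.mul'_apply, LinearMap.mulRight_apply, mul_assoc])
      rw [hOH, LinearMap.mem_ker] at hξ ⊢
      rw [← LinearMap.comp_apply, hcomm, LinearMap.comp_apply, hξ, map_zero]
    -- stability of NP under the doubled multiplications
    have stabNPL : ∀ (m : M) (h : H), ∀ x ∈ NP,
        TensorProduct.map (TensorProduct.map (LinearMap.mulLeft k m) LinearMap.id)
          (TensorProduct.map (LinearMap.mulLeft k h) LinearMap.id) x ∈ NP := by
      intro m h
      have hmap : Submodule.map (TensorProduct.map
          (TensorProduct.map (LinearMap.mulLeft k m) LinearMap.id)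
          (TensorProduct.map (LinearMap.mulLeft k h) LinearMap.id)) NP ≤ NP := by
        conv_lhs => rw [hNP]
        rw [Submodule.map_sup, Submodule.map_sup]
        refine sup_le (sup_le ?_ ?_) ?_ <;> rw [Submodule.map_span_le]
        · rintro x ⟨ν, hν, t, rfl⟩
          rw [TensorProduct.map_tmul]
          exact hgen1 _ ((hMbi m).1 (Submodule.mem_map_of_mem hν)) _
        · rintro x ⟨s, ξ, hξ, rfl⟩
          rw [TensorProduct.map_tmul]
          exact hgen2 _ _ ((hHbi h).1 (Submodule.mem_map_of_mem hξ))
        · rintro x ⟨ω, hω, ξ, hξ, rfl⟩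
          rw [TensorProduct.map_tmul]
          exact hgen3 _ (stabOML m ω hω) _ (stabOHL h ξ hξ)
      exact fun x hx => hmap (Submodule.mem_map_of_mem hx)
    have stabNPR : ∀ (m : M) (h : H), ∀ x ∈ NP,
        TensorProduct.map (TensorProduct.map LinearMap.id (LinearMap.mulRight k m))
          (TensorProduct.map LinearMap.id (LinearMap.mulRight k h)) x ∈ NP := by
      intro m h
      have hmap : Submodule.map (TensorProduct.map
          (TensorProduct.map LinearMap.id (LinearMap.mulRight k m))
          (TensorProduct.map LinearMap.id (LinearMap.mulRight k h))) NP ≤ NP := by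
        conv_lhs => rw [hNP]
        rw [Submodule.map_sup, Submodule.map_sup]
        refine sup_le (sup_le ?_ ?_) ?_ <;> rw [Submodule.map_span_le]
        · rintro x ⟨ν, hν, t, rfl⟩
          rw [TensorProduct.map_tmul]
          exact hgen1 _ ((hMbi m).2 (Submodule.mem_map_of_mem hν)) _
        · rintro x ⟨s, ξ, hξ, rfl⟩
          rw [TensorProduct.map_tmul]
          exact hgen2 _ _ ((hHbi h).2 (Submodule.mem_map_of_mem hξ))
        · rintro x ⟨ω, hω, ξ, hξ, rfl⟩
          rw [TensorProduct.map_tmul]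
          exact hgen3 _ (stabOMR m ω hω) _ (stabOHR h ξ hξ)
      exact fun x hx => hmap (Submodule.mem_map_of_mem hx)
    -- conjugation identities
    have conjL : ∀ (m : M) (h : H),
        c.toLinearMap ∘ₗ (TensorProduct.map (LinearMap.mulLeft k (m ⊗ₜ[k] h)) LinearMap.id)
            ∘ₗ c.symm.toLinearMap
          = TensorProduct.map (TensorProduct.map (LinearMap.mulLeft k m) LinearMap.id)
              (TensorProduct.map (LinearMap.mulLeft k h) LinearMap.id) := by
      intro m h
      apply TensorProduct.ext_fourfold'
      intro a b u v
      simp [hcdef, TensorProduct.tensorTensorTensorComm_symm,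
        TensorProduct.tensorTensorTensorComm_tmul, LinearMap.mulLeft_apply,
        Algebra.TensorProduct.tmul_mul_tmul]
    have conjR : ∀ (m : M) (h : H),
        c.toLinearMap ∘ₗ (TensorProduct.map LinearMap.id (LinearMap.mulRight k (m ⊗ₜ[k] h)))
            ∘ₗ c.symm.toLinearMap
          = TensorProduct.map (TensorProduct.map LinearMap.id (LinearMap.mulRight k m))
              (TensorProduct.map LinearMap.id (LinearMap.mulRight k h)) := by
      intro m h
      apply TensorProduct.ext_fourfold'
      intro a b u v
      simp [hcdef, TensorProduct.tensorTensorTensorComm_symm,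
        TensorProduct.tensorTensorTensorComm_tmul, LinearMap.mulRight_apply,
        Algebra.TensorProduct.tmul_mul_tmul]
    -- key conjugated stability, by induction on q
    have GkeyL : ∀ q : M ⊗[k] H, ∀ x ∈ NP,
        c (TensorProduct.map (LinearMap.mulLeft k q) LinearMap.id (c.symm x)) ∈ NP := by
      intro q
      induction q using TensorProduct.induction_on with
      | zero =>
        intro x hx
        have h0 : TensorProduct.map (LinearMap.mulLeft k (0 : M ⊗[k] H))
            (LinearMap.id : M ⊗[k] H →ₗ[k] M ⊗[k] H) = 0 := by
          rw [LinearMap.mulLeft_zero_eq_zero]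
          exact TensorProduct.ext' (fun a b => by simp)
        rw [h0, LinearMap.zero_apply, map_zero]
        exact Submodule.zero_mem NP
      | tmul m h =>
        intro x hx
        have := LinearMap.congr_fun (conjL m h) x
        simp only [LinearMap.comp_apply, LinearEquiv.coe_coe] at this
        rw [this]
        exact stabNPL m h x hx
      | add q₁ q₂ h₁ h₂ =>
        intro x hx
        have hadd : LinearMap.mulLeft k (q₁ + q₂)
            = LinearMap.mulLeft k q₁ + LinearMap.mulLeft k q₂ := by
          ext a; simp [LinearMap.mulLeft_apply, add_mul]
        rw [hadd, TensorProduct.map_add_left, LinearMap.add_apply, map_add]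
        exact Submodule.add_mem _ (h₁ x hx) (h₂ x hx)
    have GkeyR : ∀ q : M ⊗[k] H, ∀ x ∈ NP,
        c (TensorProduct.map LinearMap.id (LinearMap.mulRight k q) (c.symm x)) ∈ NP := by
      intro q
      induction q using TensorProduct.induction_on with
      | zero =>
        intro x hx
        have h0 : TensorProduct.map (LinearMap.id : M ⊗[k] H →ₗ[k] M ⊗[k] H)
            (LinearMap.mulRight k (0 : M ⊗[k] H)) = 0 := by
          have : LinearMap.mulRight k (0 : M ⊗[k] H) = 0 := by
            ext a; simp [LinearMap.mulRight_apply]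
          rw [this]
          exact TensorProduct.ext' (fun a b => by simp)
        rw [h0, LinearMap.zero_apply, map_zero]
        exact Submodule.zero_mem NP
      | tmul m h =>
        intro x hx
        have := LinearMap.congr_fun (conjR m h) x
        simp only [LinearMap.comp_apply, LinearEquiv.coe_coe] at this
        rw [this]
        exact stabNPR m h x hx
      | add q₁ q₂ h₁ h₂ =>
        intro x hx
        have hadd : LinearMap.mulRight k (q₁ + q₂)
            = LinearMap.mulRight k q₁ + LinearMap.mulRight k q₂ := by
          ext a; simp [LinearMap.mulRight_apply, mul_add]
        rw [hadd, TensorProduct.map_add_right, LinearMap.add_apply, map_add]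
        exact Submodule.add_mem _ (h₁ x hx) (h₂ x hx)
    refine ⟨?_, ?_⟩
    · -- contained in the kernel of the multiplication
      have hmulid : (LinearMap.mul' k (M ⊗[k] H)) ∘ₗ c.symm.toLinearMap
          = TensorProduct.map (LinearMap.mul' k M) (LinearMap.mul' k H) := by
        apply TensorProduct.ext_fourfold'
        intro a b u v
        simp [hcdef, TensorProduct.tensorTensorTensorComm_symm,
          TensorProduct.tensorTensorTensorComm_tmul, LinearMap.mul'_apply,
          Algebra.TensorProduct.tmul_mul_tmul]
      have hker : NP ≤ LinearMap.ker (TensorProduct.map (LinearMap.mul' k M)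
          (LinearMap.mul' k H)) := by
        rw [hNP]
        refine sup_le (sup_le ?_ ?_) ?_ <;> rw [Submodule.span_le]
        · rintro x ⟨ν, hν, t, rfl⟩
          rw [SetLike.mem_coe, LinearMap.mem_ker, TensorProduct.map_tmul, memNM ν hν,
            TensorProduct.zero_tmul]
        · rintro x ⟨s, ξ, hξ, rfl⟩
          rw [SetLike.mem_coe, LinearMap.mem_ker, TensorProduct.map_tmul, memNH ξ hξ,
            TensorProduct.tmul_zero]
        · rintro x ⟨ω, hω, ξ, hξ, rfl⟩
          rw [SetLike.mem_coe, LinearMap.mem_ker, TensorProduct.map_tmul, memOM ω hω,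
            TensorProduct.zero_tmul]
      rintro y ⟨x, hx, rfl⟩
      rw [LinearMap.mem_ker, ← LinearMap.comp_apply, hmulid]
      exact LinearMap.mem_ker.mp (hker hx)
    · intro q
      constructor
      · rintro y ⟨z, ⟨x, hx, rfl⟩, rfl⟩
        refine ⟨c (TensorProduct.map (LinearMap.mulLeft k q) LinearMap.id
          (c.symm.toLinearMap x)), GkeyL q x hx, ?_⟩
        simp
      · rintro y ⟨z, ⟨x, hx, rfl⟩, rfl⟩
        refine ⟨c (TensorProduct.map LinearMap.id (LinearMap.mulRight k q)
          (c.symm.toLinearMap x)), GkeyR q x hx, ?_⟩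
        simp
end
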